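/- arXiv:2302.11058 — 8 statements merged into one kernel-verified Lean document; each statement's English description precedes it below -/
import Mathlib

section
/- For every θ ∈ Θ, N ∈ ℕ and N' ∈ ℕ, the risk difference satisfies Δ_θ(N, N') = E_θ[ log((N' + N + α_S)/(N + α_S)) + Σ_{j=0}^m θ_{A_j} · log( (X_{A_j} + α_{A_j}) / (Y_{A_j} + X_{A_j} + α_{A_j}) ) ]. -/
open Finset

noncomputable section

/-- The finite set of multinomial outcome vectors with total `N`. -/
def counts (k N : ℕ) : Finset (Fin k → ℕ) :=
  (Fintype.piFinset fun _ => Finset.range (N + 1)).filter fun x => ∑ i, x i = N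

/-- The multinomial probability mass function with cell probabilities `θ`. -/
def mpmf {k : ℕ} (θ : Fin k → ℝ) (x : Fin k → ℕ) : ℝ :=
  (Nat.multinomial Finset.univ x : ℝ) * ∏ i, θ i ^ x i

/-- The Kullback–Leibler loss `L(p, θ) = Σ_i θ_i log(θ_i / p_i)`. -/
def KLloss {k : ℕ} (p θ : Fin k → ℝ) : ℝ := ∑ i, θ i * Real.log (θ i / p i)

/-- The Bayes estimator `θ̂` using the fully classified data `x` together with the
partially classified (aggregated) data `y`. -/
def thetaHat {k m : ℕ} (A : Fin (m + 1) → Finset (Fin k)) (α : Fin k → ℝ)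
    (N N' : ℕ) (x : Fin k → ℕ) (y : Fin (m + 1) → ℕ) (i : Fin k) : ℝ :=
  ∑ j, if i ∈ A j then
      ((α i + (x i : ℝ)) / (∑ r ∈ A j, ((x r : ℝ) + α r))) *
        (((y j : ℝ) + ∑ r ∈ A j, ((x r : ℝ) + α r)) / ((N : ℝ) + (N' : ℝ) + ∑ c, α c))
    else 0

/-- The Bayes estimator `θ̃` using only the fully classified data `x`. -/
def thetaTilde {k : ℕ} (α : Fin k → ℝ) (N : ℕ) (x : Fin k → ℕ) (i : Fin k) : ℝ :=
  ((x i : ℝ) + α i) / ((N : ℝ) + ∑ c, α c)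

/-- The risk difference `Δ_θ(N, N') = E_θ[L(θ̂, θ)] − E_θ[L(θ̃, θ)]`, the expectation
being the finite sum over all outcomes `(x, y')` weighted by the multinomial pmfs. -/
def riskDiff {k m : ℕ} (A : Fin (m + 1) → Finset (Fin k)) (α θ : Fin k → ℝ)
    (N N' : ℕ) : ℝ :=
  ∑ x ∈ counts k N, ∑ y' ∈ counts k N',
    mpmf θ x * mpmf θ y' *
      (KLloss (thetaHat A α N N' x fun j => ∑ i ∈ A j, y' i) θ -
        KLloss (thetaTilde α N x) θ)

lemma key_log (t a B C D E : ℝ) (ht : 0 < t) (ha : 0 < a) (hB : 0 < B)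
    (hC : 0 < C) (hD : 0 < D) (hE : 0 < E) :
    t * Real.log (t / (a / B * (C / E))) - t * Real.log (t / (a / D)) =
      t * (Real.log (E / D) + Real.log (B / C)) := by
  rw [Real.log_div ht.ne' (by positivity), Real.log_div ht.ne' (by positivity),
      Real.log_mul (by positivity) (by positivity),
      Real.log_div ha.ne' hB.ne', Real.log_div hC.ne' hE.ne',
      Real.log_div ha.ne' hD.ne', Real.log_div hE.ne' hD.ne',
      Real.log_div hB.ne' hC.ne']
  ring

lemma pointwise_eq {k m : ℕ} (hk : 2 ≤ k)
    (A : Fin (m + 1) → Finset (Fin k))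
    (hAne : ∀ j, (A j).Nonempty)
    (hAdisj : ∀ j j', j ≠ j' → Disjoint (A j) (A j'))
    (hAcover : ∀ i, ∃ j, i ∈ A j)
    (α : Fin k → ℝ) (hα : ∀ i, 0 < α i)
    (θ : Fin k → ℝ) (hθ : ∀ i, 0 < θ i) (hθsum : ∑ i, θ i = 1)
    (N N' : ℕ) (x y' : Fin k → ℕ) :
    (KLloss (fun i => ∑ j, if i ∈ A j then
      ((α i + (x i : ℝ)) / (∑ r ∈ A j, ((x r : ℝ) + α r))) *
        ((((∑ i ∈ A j, y' i : ℕ) : ℝ) + ∑ r ∈ A j, ((x r : ℝ) + α r)) / ((N : ℝ) + (N' : ℝ) + ∑ c, α c))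
    else 0) θ -
        KLloss (thetaTilde α N x) θ) =
          (Real.log (((N' : ℝ) + (N : ℝ) + ∑ c, α c) / ((N : ℝ) + ∑ c, α c)) +
            ∑ j, (∑ i ∈ A j, θ i) *
              Real.log (((∑ i ∈ A j, (x i : ℝ)) + ∑ i ∈ A j, α i) /
                ((∑ i ∈ A j, (y' i : ℝ)) + (∑ i ∈ A j, (x i : ℝ)) + ∑ i ∈ A j, α i))) := by
  set S := ∑ c, α c with hSdef
  have hS0 : 0 < S := Finset.sum_pos (fun i _ => hα i) ⟨⟨0, by omega⟩, mem_univ _⟩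
  have hD : (0:ℝ) < (N : ℝ) + S := by positivity
  have hE : (0:ℝ) < (N : ℝ) + (N' : ℝ) + S := by positivity
  set B : Fin (m+1) → ℝ := fun j => (∑ i ∈ A j, (x i : ℝ)) + ∑ i ∈ A j, α i with hBdef
  set C : Fin (m+1) → ℝ := fun j => (∑ i ∈ A j, (y' i : ℝ)) + B j with hCdef
  have hBsum : ∀ j, (∑ r ∈ A j, ((x r : ℝ) + α r)) = B j := fun j => Finset.sum_add_distrib
  have hB0 : ∀ j, 0 < B j := fun j => by
    have : 0 < ∑ i ∈ A j, α i := Finset.sum_pos (fun i _ => hα i) (hAne j)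
    have h2 : 0 ≤ ∑ i ∈ A j, (x i : ℝ) := Finset.sum_nonneg fun i _ => by positivity
    simp only [hBdef]; linarith
  have hC0 : ∀ j, 0 < C j := fun j => by
    have h2 : 0 ≤ ∑ i ∈ A j, (y' i : ℝ) := Finset.sum_nonneg fun i _ => by positivity
    have := hB0 j; simp only [hCdef]; linarith
  have hpart : ∀ g : Fin k → ℝ, ∑ i, g i = ∑ j, ∑ i ∈ A j, g i := by
    intro g
    have huniv : (Finset.univ : Finset (Fin (m+1))).biUnion A = Finset.univ := by
      ext i; simpa using hAcover i
    rw [← huniv, Finset.sum_biUnion (fun j _ j' _ h => hAdisj j j' h)]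
  have hhat : ∀ j, ∀ i ∈ A j,
      (∑ j', if i ∈ A j' then
        ((α i + (x i : ℝ)) / (∑ r ∈ A j', ((x r : ℝ) + α r))) *
          ((((∑ i ∈ A j', y' i : ℕ) : ℝ) + ∑ r ∈ A j', ((x r : ℝ) + α r)) /
            ((N : ℝ) + (N' : ℝ) + S)) else 0)
      = ((x i : ℝ) + α i) / B j * (C j / ((N : ℝ) + (N' : ℝ) + S)) := by
    intro j i hi
    rw [Finset.sum_eq_single j]
    · simp only [hi, if_true, hBsum, hCdef, Nat.cast_sum, add_comm (α i) ((x i : ℝ))]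
    · intro j' _ hj'
      have : i ∉ A j' := fun h => Finset.disjoint_left.mp (hAdisj j' j hj') h hi
      simp [this]
    · intro h; exact absurd (mem_univ j) h
  unfold KLloss thetaTilde
  rw [← Finset.sum_sub_distrib, hpart]
  have step : ∀ j, ∀ i ∈ A j,
      θ i * Real.log (θ i / ∑ j', if i ∈ A j' then
        ((α i + (x i : ℝ)) / (∑ r ∈ A j', ((x r : ℝ) + α r))) *
          ((((∑ i ∈ A j', y' i : ℕ) : ℝ) + ∑ r ∈ A j', ((x r : ℝ) + α r)) /
            ((N : ℝ) + (N' : ℝ) + S)) else 0) -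
        θ i * Real.log (θ i / (((x i : ℝ) + α i) / ((N : ℝ) + S))) =
      θ i * (Real.log (((N : ℝ) + (N' : ℝ) + S) / ((N : ℝ) + S)) + Real.log (B j / C j)) := by
    intro j i hi
    rw [hhat j i hi]
    exact key_log (θ i) ((x i : ℝ) + α i) (B j) (C j) ((N:ℝ)+S) ((N:ℝ)+(N':ℝ)+S)
      (hθ i) (by have := hα i; positivity) (hB0 j) (hC0 j) hD hE
  rw [Finset.sum_congr rfl fun j _ => Finset.sum_congr rfl (step j)]
  have : ∑ j, ∑ i ∈ A j, θ i * (Real.log (((N : ℝ) + (N' : ℝ) + S) / ((N : ℝ) + S)) +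
      Real.log (B j / C j)) =
      Real.log (((N : ℝ) + (N' : ℝ) + S) / ((N : ℝ) + S)) * (∑ j, ∑ i ∈ A j, θ i) +
      ∑ j, (∑ i ∈ A j, θ i) * Real.log (B j / C j) := by
    rw [Finset.mul_sum, ← Finset.sum_add_distrib]
    refine Finset.sum_congr rfl fun j _ => ?_
    rw [Finset.mul_sum, Finset.sum_mul, ← Finset.sum_add_distrib]
    refine Finset.sum_congr rfl fun i _ => by ring
  rw [this, ← hpart θ, hθsum, mul_one, add_comm ((N:ℝ)) ((N':ℝ))]
  simp only [hBdef, hCdef, add_assoc]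

/-- **Lemma 2 (first equality).** The risk difference equals the expectation of
`log((N'+N+α_S)/(N+α_S)) + Σ_j θ_{A_j} log((X_{A_j}+α_{A_j})/(Y_{A_j}+X_{A_j}+α_{A_j}))`. -/
theorem risk_difference_decomposition {k m : ℕ} (hk : 2 ≤ k)
    (A : Fin (m + 1) → Finset (Fin k))
    (hAne : ∀ j, (A j).Nonempty)
    (hAdisj : ∀ j j', j ≠ j' → Disjoint (A j) (A j'))
    (hAcover : ∀ i, ∃ j, i ∈ A j)
    (α : Fin k → ℝ) (hα : ∀ i, 0 < α i)
    (θ : Fin k → ℝ) (hθ : ∀ i, 0 < θ i) (hθsum : ∑ i, θ i = 1)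
    (N N' : ℕ) :
    riskDiff A α θ N N' =
      ∑ x ∈ counts k N, ∑ y' ∈ counts k N',
        mpmf θ x * mpmf θ y' *
          (Real.log (((N' : ℝ) + (N : ℝ) + ∑ c, α c) / ((N : ℝ) + ∑ c, α c)) +
            ∑ j, (∑ i ∈ A j, θ i) *
              Real.log (((∑ i ∈ A j, (x i : ℝ)) + ∑ i ∈ A j, α i) /
                ((∑ i ∈ A j, (y' i : ℝ)) + (∑ i ∈ A j, (x i : ℝ)) + ∑ i ∈ A j, α i))) := by
  unfold riskDiff
  refine Finset.sum_congr rfl fun x _ => Finset.sum_congr rfl fun y' _ => ?_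
  congr 1
  exact pointwise_eq hk A hAne hAdisj hAcover α hα θ hθ hθsum N N' x y'
end
end

section
/- For every θ ∈ Θ, N ∈ ℕ and N' ≥ 1, the risk difference telescopes as Δ_θ(N, N') = Σ_{u=1}^{N'} Δ_θ(N + u − 1, 1). -/
open Finset

noncomputable section

open Nat

lemma mem_counts {k N : ℕ} {x : Fin k → ℕ} : x ∈ counts k N ↔ ∑ i, x i = N := by
  constructor
  · intro h; exact (Finset.mem_filter.mp h).2
  · intro h
    refine Finset.mem_filter.mpr ⟨?_, h⟩
    rw [Fintype.mem_piFinset]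
    intro i
    rw [Finset.mem_range, Nat.lt_succ_iff, ← h]
    exact Finset.single_le_sum (f := x) (fun _ _ => Nat.zero_le _) (Finset.mem_univ i)

lemma counts_zero (k : ℕ) : counts k 0 = {fun _ => 0} := by
  ext x
  simp only [mem_counts, Finset.mem_singleton, Finset.sum_eq_zero_iff, Finset.mem_univ,
    true_implies]
  constructor
  · intro h; funext i; exact h i
  · intro h i; rw [h]

lemma mpmf_zero {k : ℕ} (θ : Fin k → ℝ) : mpmf θ (fun _ => 0) = 1 := by
  simp [mpmf, Nat.multinomial]

-- multinomial recursion
lemma multinomial_succ {k : ℕ} (x : Fin k → ℕ) (N : ℕ) (hx : ∑ i, x i = N) (i : Fin k) :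
    Nat.multinomial Finset.univ (x + Pi.single i 1) * (x i + 1)
      = (N + 1) * Nat.multinomial Finset.univ x := by
  have hP : 0 < ∏ j, (x j)! := Finset.prod_pos fun j _ => Nat.factorial_pos _
  set y : Fin k → ℕ := x + (Pi.single i 1 : Fin k → ℕ) with hy
  apply Nat.eq_of_mul_eq_mul_left hP
  have spec1 := Nat.multinomial_spec Finset.univ x
  have spec2 := Nat.multinomial_spec Finset.univ y
  have hsum2 : ∑ j, y j = N + 1 := by
    simp only [hy, Pi.add_apply, Finset.sum_add_distrib, hx]
    simp
  have hprod2 : ∏ j, (y j)! = (x i + 1) * ∏ j, (x j)! := by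
    rw [← Finset.prod_mul_prod_compl {i}, ← Finset.prod_mul_prod_compl {i} (fun j => (x j)!)]
    simp only [Finset.prod_singleton, hy, Pi.add_apply, Pi.single_eq_same]
    rw [Nat.factorial_succ]
    have : ∏ j ∈ ({i} : Finset (Fin k))ᶜ, (x j + (Pi.single i 1 : Fin k → ℕ) j)!
        = ∏ j ∈ ({i} : Finset (Fin k))ᶜ, (x j)! := by
      apply Finset.prod_congr rfl
      intro j hj
      have : j ≠ i := by simpa using hj
      simp [Pi.single_eq_of_ne this]
    rw [this]; ring
  rw [hsum2] at spec2
  rw [hx] at spec1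
  calc (∏ j, (x j)!) * (Nat.multinomial Finset.univ y * (x i + 1))
      = (∏ j, (y j)!) * Nat.multinomial Finset.univ y := by
        rw [hprod2]; ring
    _ = (N + 1)! := spec2
    _ = (N + 1) * ((∏ j, (x j)!) * Nat.multinomial Finset.univ x) := by
        rw [spec1, Nat.factorial_succ]
    _ = (∏ j, (x j)!) * ((N + 1) * Nat.multinomial Finset.univ x) := by ring


def eSingle {k : ℕ} (i : Fin k) : Fin k → ℕ := Pi.single i 1

lemma eSingle_apply {k : ℕ} (i j : Fin k) : eSingle i j = if j = i then 1 else 0 := by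
  unfold eSingle
  by_cases h : j = i
  · subst h; simp
  · simp [Pi.single_eq_of_ne h, h]

lemma sum_eSingle {k : ℕ} (i : Fin k) : ∑ j, eSingle i j = 1 := by
  simp [eSingle_apply]

lemma prod_pow_eSingle {k : ℕ} (θ : Fin k → ℝ) (x : Fin k → ℕ) (i : Fin k) :
    ∏ j, θ j ^ (x + eSingle i) j = θ i * ∏ j, θ j ^ x j := by
  have h1 : ∀ j : Fin k, θ j ^ (x + eSingle i) j = θ j ^ x j * (if j = i then θ i else 1) := by
    intro j
    rw [Pi.add_apply, pow_add, eSingle_apply]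
    by_cases h : j = i
    · subst h; simp
    · simp [h]
  rw [Finset.prod_congr rfl (fun j _ => h1 j), Finset.prod_mul_distrib,
    Finset.prod_ite_eq' Finset.univ i (fun _ => θ i)]
  simp [mul_comm]

lemma mpmf_succ {k : ℕ} (θ : Fin k → ℝ) (x : Fin k → ℕ) (N : ℕ) (hx : ∑ i, x i = N)
    (i : Fin k) :
    ((x i : ℝ) + 1) * mpmf θ (x + eSingle i) = ((N : ℝ) + 1) * (θ i * mpmf θ x) := by
  have h := multinomial_succ x N hx i
  have hc : ((Nat.multinomial Finset.univ (x + Pi.single i 1) : ℕ) : ℝ) * ((x i : ℝ) + 1)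
      = ((N : ℝ) + 1) * ((Nat.multinomial Finset.univ x : ℕ) : ℝ) := by
    exact_mod_cast h
  unfold mpmf
  rw [prod_pow_eSingle]
  have : (x + eSingle i) = (x + Pi.single i 1) := rfl
  rw [this]
  linear_combination (θ i * ∏ j, θ j ^ x j) * hc

lemma step_sum {k : ℕ} (θ : Fin k → ℝ) (N : ℕ) (f : (Fin k → ℕ) → ℝ) :
    ∑ x ∈ counts k (N + 1), mpmf θ x * f x
      = ∑ i, θ i * ∑ x ∈ counts k N, mpmf θ x * f (x + eSingle i) := by
  have key : ∀ i : Fin k, θ i * ∑ x ∈ counts k N, mpmf θ x * f (x + eSingle i)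
      = ∑ x ∈ counts k (N + 1), ((x i : ℝ) / ((N : ℝ) + 1)) * (mpmf θ x * f x) := by
    intro i
    rw [Finset.mul_sum]
    rw [← Finset.sum_filter_of_ne (s := counts k (N + 1))
      (p := fun x => 0 < x i) (f := fun x => ((x i : ℝ) / ((N : ℝ) + 1)) * (mpmf θ x * f x))
      (by intro x _ hne; by_contra h; push_neg at h; simp [Nat.le_zero.mp h] at hne)]
    apply Finset.sum_nbij' (i := fun x => x + eSingle i) (j := fun x => x - eSingle i)
    · intro x hx
      have hx' := mem_counts.mp hx
      simp only [Finset.mem_filter]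
      constructor
      · apply mem_counts.mpr
        simp only [Pi.add_apply, Finset.sum_add_distrib, hx', sum_eSingle]
      · simp [eSingle_apply]
    · intro x hx
      rw [Finset.mem_filter] at hx
      obtain ⟨hx1, hx2⟩ := hx
      have hx1' := mem_counts.mp hx1
      apply mem_counts.mpr
      have hrec : ∀ j, ((x - eSingle i) + eSingle i) j = x j := by
        intro j
        simp only [Pi.add_apply, Pi.sub_apply, eSingle_apply]
        by_cases h : j = i
        · subst h; simp; omega
        · simp [h]
      have h2 : ∑ j, ((x - eSingle i) + eSingle i) j = N + 1 := by
        rw [Finset.sum_congr rfl (fun j _ => hrec j)]; exact hx1'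
      simp only [Pi.add_apply, Finset.sum_add_distrib, sum_eSingle] at h2
      omega
    · intro x hx
      funext j
      simp only [Pi.sub_apply, Pi.add_apply, eSingle_apply]
      by_cases h : j = i
      · simp [h]
      · simp [h]
    · intro x hx
      rw [Finset.mem_filter] at hx
      funext j
      simp only [Pi.sub_apply, Pi.add_apply, eSingle_apply]
      by_cases h : j = i
      · subst h; have := hx.2; simp; omega
      · simp [h]
    · intro x hx
      have hx' := mem_counts.mp hx
      have h := mpmf_succ θ x N hx' i
      have hxi : (((x + eSingle i) i : ℕ) : ℝ) = (x i : ℝ) + 1 := by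
        simp [eSingle_apply]
      rw [hxi]
      have hN1 : ((N : ℝ) + 1) ≠ 0 := by positivity
      rw [div_mul_eq_mul_div, eq_div_iff hN1]
      linear_combination (-(f (x + eSingle i))) * h
  rw [Finset.sum_congr rfl (fun i _ => key i), Finset.sum_comm]
  apply Finset.sum_congr rfl
  intro x hx
  have hx' := mem_counts.mp hx
  rw [← Finset.sum_mul]
  have : ∑ i, ((x i : ℝ) / ((N : ℝ) + 1)) = 1 := by
    rw [← Finset.sum_div]
    have : ∑ i, ((x i : ℕ) : ℝ) = ((N : ℝ) + 1) := by
      rw [← Nat.cast_sum, hx']; push_cast; ring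
    rw [this]; field_simp
  rw [this, one_mul]

def binExp (p : ℝ) (M : ℕ) (g : ℕ → ℝ) : ℝ :=
  ∑ s ∈ Finset.range (M + 1), (M.choose s : ℝ) * p ^ s * (1 - p) ^ (M - s) * g s

lemma binExp_zero (p : ℝ) (g : ℕ → ℝ) : binExp p 0 g = g 0 := by
  simp [binExp]

lemma binExp_succ (p : ℝ) (M : ℕ) (g : ℕ → ℝ) :
    binExp p (M + 1) g = p * binExp p M (fun s => g (s + 1)) + (1 - p) * binExp p M g := by
  unfold binExp
  rw [Finset.sum_range_succ' (fun s => ((M+1).choose s : ℝ) * p ^ s * (1 - p) ^ (M + 1 - s) * g s) (M+1)]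
  have split : ∀ t ∈ Finset.range (M + 1),
      (((M+1).choose (t+1) : ℝ) * p ^ (t+1) * (1 - p) ^ (M + 1 - (t+1)) * g (t+1))
      = ((M.choose t : ℝ) * p ^ (t+1) * (1 - p) ^ (M - t) * g (t+1))
        + ((M.choose (t+1) : ℝ) * p ^ (t+1) * (1 - p) ^ (M - (t+1) + 1) * g (t+1)) := by
    intro t ht
    rw [Finset.mem_range] at ht
    have h1 : (M+1).choose (t+1) = M.choose t + M.choose (t+1) := Nat.choose_succ_succ M t
    have h2 : M + 1 - (t + 1) = M - t := by omega
    by_cases hcase : t < M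
    · have h3 : M - (t+1) + 1 = M - t := by omega
      rw [h1, h2, h3]
      push_cast
      ring
    · have ht' : t = M := by omega
      subst ht'
      rw [h1, h2]
      simp [Nat.choose_succ_self]
  rw [Finset.sum_congr rfl split, Finset.sum_add_distrib]
  have e1 : ∑ t ∈ Finset.range (M+1), ((M.choose t : ℝ) * p ^ (t+1) * (1 - p) ^ (M - t) * g (t+1))
      = p * ∑ t ∈ Finset.range (M+1), ((M.choose t : ℝ) * p ^ t * (1 - p) ^ (M - t) * g (t+1)) := by
    rw [Finset.mul_sum]
    apply Finset.sum_congr rfl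
    intro t _
    ring
  have e2 : (∑ t ∈ Finset.range (M+1), ((M.choose (t+1) : ℝ) * p ^ (t+1) * (1 - p) ^ (M - (t+1) + 1) * g (t+1)))
        + ((M+1).choose 0 : ℝ) * p ^ 0 * (1 - p) ^ (M + 1 - 0) * g 0
      = (1 - p) * ∑ s ∈ Finset.range (M+1), ((M.choose s : ℝ) * p ^ s * (1 - p) ^ (M - s) * g s) := by
    rw [Finset.sum_range_succ (fun t => ((M.choose (t+1) : ℝ) * p ^ (t+1) * (1 - p) ^ (M - (t+1) + 1) * g (t+1))) M]
    rw [Finset.mul_sum,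
      Finset.sum_range_succ' (fun s => (1-p) * ((M.choose s : ℝ) * p ^ s * (1 - p) ^ (M - s) * g s)) M]
    have hS : ∑ t ∈ Finset.range M, ((M.choose (t+1) : ℝ) * p ^ (t+1) * (1 - p) ^ (M - (t+1) + 1) * g (t+1))
        = ∑ t ∈ Finset.range M, ((1-p) * ((M.choose (t+1) : ℝ) * p ^ (t+1) * (1 - p) ^ (M - (t+1)) * g (t+1))) := by
      apply Finset.sum_congr rfl
      intro t _
      ring
    have htop : ((M.choose (M+1) : ℕ) : ℝ) = 0 := by
      rw [Nat.choose_succ_self]; simp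
    rw [hS, htop]
    simp only [Nat.choose_zero_right, pow_zero, Nat.sub_zero, Nat.cast_one]
    ring
  rw [add_assoc, e1, e2]

lemma binExp_const_one (p : ℝ) (M : ℕ) : binExp p M (fun _ => 1) = 1 := by
  induction M with
  | zero => simp [binExp]
  | succ M ih => rw [binExp_succ, ih]; ring

lemma binExp_conv (p : ℝ) (N N' : ℕ) (g : ℕ → ℝ) :
    binExp p N (fun s => binExp p N' (fun t => g (s + t))) = binExp p (N + N') g := by
  induction N generalizing g with
  | zero =>
    rw [binExp_zero, zero_add]
    apply Finset.sum_congr rfl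
    intro t _
    simp
  | succ N ih =>
    rw [binExp_succ]
    have e1 : (fun s => binExp p N' (fun t => g (s + 1 + t)))
        = (fun s => binExp p N' (fun t => (fun u => g (u + 1)) (s + t))) := by
      funext s
      congr 1
      funext t
      congr 1
      omega
    have goal1 : binExp p N (fun s => binExp p N' (fun t => g (s + 1 + t)))
        = binExp p (N + N') (fun u => g (u + 1)) := by
      rw [show (fun s => binExp p N' (fun t => g (s + 1 + t)))
        = (fun s => binExp p N' (fun t => (fun u => g (u + 1)) (s + t))) from e1]
      exact ih (fun u => g (u + 1))
    rw [goal1, ih g]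
    rw [show N + 1 + N' = (N + N') + 1 by omega, binExp_succ]

lemma marg {k : ℕ} (θ : Fin k → ℝ) (hθsum : ∑ i, θ i = 1) (B : Finset (Fin k)) (N : ℕ)
    (g : ℕ → ℝ) :
    ∑ x ∈ counts k N, mpmf θ x * g (∑ i ∈ B, x i) = binExp (∑ i ∈ B, θ i) N g := by
  induction N generalizing g with
  | zero =>
    rw [counts_zero, Finset.sum_singleton, mpmf_zero, binExp_zero]
    simp
  | succ N ih =>
    rw [step_sum θ N (fun x => g (∑ i ∈ B, x i))]
    have harg : ∀ (i : Fin k) (x : Fin k → ℕ),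
        ∑ r ∈ B, (x + eSingle i) r = (∑ r ∈ B, x r) + (if i ∈ B then 1 else 0) := by
      intro i x
      simp only [Pi.add_apply, Finset.sum_add_distrib]
      congr 1
      rw [Finset.sum_congr rfl (fun r _ => eSingle_apply i r)]
      exact Finset.sum_ite_eq' B i (fun _ => 1)
    have hsp : ∀ i : Fin k,
        θ i * ∑ x ∈ counts k N, mpmf θ x * g (∑ r ∈ B, (x + eSingle i) r)
        = if i ∈ B then θ i * binExp (∑ i ∈ B, θ i) N (fun s => g (s + 1))
          else θ i * binExp (∑ i ∈ B, θ i) N g := by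
      intro i
      by_cases h : i ∈ B
      · rw [if_pos h]
        congr 1
        rw [← ih (fun s => g (s + 1))]
        apply Finset.sum_congr rfl
        intro x _
        rw [harg i x, if_pos h]
      · rw [if_neg h]
        congr 1
        rw [← ih g]
        apply Finset.sum_congr rfl
        intro x _
        rw [harg i x, if_neg h]
        simp
    rw [Finset.sum_congr rfl (fun i _ => hsp i), Finset.sum_ite]
    have hf1 : Finset.filter (fun i => i ∈ B) Finset.univ = B := by ext i; simp
    have hf2 : Finset.filter (fun i => ¬ i ∈ B) Finset.univ = Bᶜ := by ext i; simp
    rw [hf1, hf2, ← Finset.sum_mul, ← Finset.sum_mul]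
    have hcompl : ∑ i ∈ Bᶜ, θ i = 1 - ∑ i ∈ B, θ i := by
      have h := Finset.sum_add_sum_compl B θ
      rw [hθsum] at h
      linarith
    rw [hcompl, binExp_succ]

lemma sum_mpmf {k : ℕ} (θ : Fin k → ℝ) (hθsum : ∑ i, θ i = 1) (N : ℕ) :
    ∑ x ∈ counts k N, mpmf θ x = 1 := by
  have h := marg θ hθsum ∅ N (fun _ => 1)
  rw [binExp_const_one] at h
  simpa using h

lemma double_marg {k : ℕ} (θ : Fin k → ℝ) (hθsum : ∑ i, θ i = 1) (B : Finset (Fin k))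
    (N N' : ℕ) (g : ℕ → ℝ) :
    ∑ x ∈ counts k N, ∑ y ∈ counts k N', mpmf θ x * mpmf θ y * g (∑ i ∈ B, x i)
      = binExp (∑ i ∈ B, θ i) N g := by
  have inner : ∀ x : Fin k → ℕ, ∑ y ∈ counts k N', mpmf θ x * mpmf θ y * g (∑ i ∈ B, x i)
      = mpmf θ x * g (∑ i ∈ B, x i) := by
    intro x
    calc ∑ y ∈ counts k N', mpmf θ x * mpmf θ y * g (∑ i ∈ B, x i)
        = (mpmf θ x * g (∑ i ∈ B, x i)) * ∑ y ∈ counts k N', mpmf θ y := by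
          rw [Finset.mul_sum]
          apply Finset.sum_congr rfl
          intro y _
          ring
      _ = mpmf θ x * g (∑ i ∈ B, x i) := by rw [sum_mpmf θ hθsum N', mul_one]
  rw [Finset.sum_congr rfl (fun x _ => inner x)]
  exact marg θ hθsum B N g

lemma conv_marg {k : ℕ} (θ : Fin k → ℝ) (hθsum : ∑ i, θ i = 1) (B : Finset (Fin k))
    (N N' : ℕ) (g : ℕ → ℝ) :
    ∑ x ∈ counts k N, ∑ y ∈ counts k N', mpmf θ x * mpmf θ y * g (∑ i ∈ B, x i + ∑ i ∈ B, y i)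
      = binExp (∑ i ∈ B, θ i) (N + N') g := by
  have inner : ∀ x : Fin k → ℕ, ∑ y ∈ counts k N', mpmf θ x * mpmf θ y * g (∑ i ∈ B, x i + ∑ i ∈ B, y i)
      = mpmf θ x * binExp (∑ i ∈ B, θ i) N' (fun t => g (∑ i ∈ B, x i + t)) := by
    intro x
    rw [← marg θ hθsum B N' (fun t => g (∑ i ∈ B, x i + t)), Finset.mul_sum]
    apply Finset.sum_congr rfl
    intro y _
    ring
  rw [Finset.sum_congr rfl (fun x _ => inner x),
    marg θ hθsum B N (fun s => binExp (∑ i ∈ B, θ i) N' (fun t => g (s + t))),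
    binExp_conv]







section KL

variable {k m : ℕ} (hk : 2 ≤ k) (A : Fin (m + 1) → Finset (Fin k))
  (hAne : ∀ j, (A j).Nonempty)
  (hAdisj : ∀ j j', j ≠ j' → Disjoint (A j) (A j'))
  (hAcover : ∀ i, ∃ j, i ∈ A j)
  (α : Fin k → ℝ) (hα : ∀ i, 0 < α i)
  (θ : Fin k → ℝ) (hθ : ∀ i, 0 < θ i) (hθsum : ∑ i, θ i = 1)

include hAdisj in
lemma thetaHat_eq (N N' : ℕ) (x : Fin k → ℕ) (y : Fin (m + 1) → ℕ) {i : Fin k}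
    {j : Fin (m + 1)} (hij : i ∈ A j) :
    thetaHat A α N N' x y i
      = ((α i + (x i : ℝ)) / (∑ r ∈ A j, ((x r : ℝ) + α r))) *
        (((y j : ℝ) + ∑ r ∈ A j, ((x r : ℝ) + α r)) / ((N : ℝ) + (N' : ℝ) + ∑ c, α c)) := by
  unfold thetaHat
  rw [Finset.sum_eq_single_of_mem j (Finset.mem_univ j)]
  · rw [if_pos hij]
  · intro j' _ hj'
    rw [if_neg]
    intro hij'
    exact (Finset.disjoint_left.mp (hAdisj j' j hj')) hij' hij

include hk hAne hAdisj hAcover hα hθ hθsum in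
lemma KL_diff (N N' : ℕ) (x y' : Fin k → ℕ) :
    KLloss (thetaHat A α N N' x fun j => ∑ i ∈ A j, y' i) θ - KLloss (thetaTilde α N x) θ
      = (∑ j, (∑ i ∈ A j, θ i) *
          (Real.log ((↑(∑ i ∈ A j, x i) : ℝ) + ∑ i ∈ A j, α i)
            - Real.log ((↑(∑ i ∈ A j, x i + ∑ i ∈ A j, y' i) : ℝ) + ∑ i ∈ A j, α i)))
        + (Real.log ((N : ℝ) + (N' : ℝ) + ∑ c, α c) - Real.log ((N : ℝ) + ∑ c, α c)) := by
  have hk0 : 0 < k := by omega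
  have : NeZero k := ⟨by omega⟩
  have hαS : 0 < ∑ c, α c :=
    Finset.sum_pos (fun i _ => hα i) Finset.univ_nonempty
  set αS := ∑ c, α c with hαSdef
  have hdd : 0 < (N : ℝ) + (N' : ℝ) + αS := by positivity
  have hdN : 0 < (N : ℝ) + αS := by positivity
  have hbb : ∀ j, 0 < ∑ r ∈ A j, ((x r : ℝ) + α r) := by
    intro j
    apply Finset.sum_pos _ (hAne j)
    intro r _
    have := hα r
    positivity
  have hbcast : ∀ j, ∑ r ∈ A j, ((x r : ℝ) + α r) = (↑(∑ i ∈ A j, x i) : ℝ) + ∑ i ∈ A j, α i := by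
    intro j
    rw [Finset.sum_add_distrib, Nat.cast_sum]
  have hecast : ∀ j, ((↑(∑ i ∈ A j, y' i) : ℝ) + ∑ r ∈ A j, ((x r : ℝ) + α r))
      = (↑(∑ i ∈ A j, x i + ∑ i ∈ A j, y' i) : ℝ) + ∑ i ∈ A j, α i := by
    intro j
    rw [hbcast j]
    push_cast
    ring
  have hHatpos : ∀ i, 0 < thetaHat A α N N' x (fun j => ∑ i ∈ A j, y' i) i := by
    intro i
    obtain ⟨j, hij⟩ := hAcover i
    rw [thetaHat_eq A hAdisj α N N' x _ hij]
    have h1 : 0 < α i + (x i : ℝ) := by have := hα i; positivity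
    have h2 := hbb j
    have h3 : (0:ℝ) ≤ ↑(∑ i ∈ A j, y' i) := Nat.cast_nonneg _
    positivity
  have hTildepos : ∀ i, 0 < thetaTilde α N x i := by
    intro i
    unfold thetaTilde
    have := hα i
    positivity
  -- rewrite difference of KL losses
  have hpart : ∀ f : Fin k → ℝ, ∑ i, f i = ∑ j, ∑ i ∈ A j, f i := by
    intro f
    have huniv : (Finset.univ : Finset (Fin k)) = Finset.univ.biUnion A := by
      ext i
      simp only [Finset.mem_univ, Finset.mem_biUnion, true_iff]
      obtain ⟨j, hj⟩ := hAcover i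
      exact ⟨j, trivial, hj⟩
    rw [huniv, Finset.sum_biUnion]
    intro j _ j' _ hne
    exact hAdisj j j' hne
  have step1 : KLloss (thetaHat A α N N' x fun j => ∑ i ∈ A j, y' i) θ
      - KLloss (thetaTilde α N x) θ
      = ∑ i, (θ i * Real.log (θ i / thetaHat A α N N' x (fun j => ∑ i ∈ A j, y' i) i)
          - θ i * Real.log (θ i / thetaTilde α N x i)) := by
    unfold KLloss
    rw [Finset.sum_sub_distrib]
  rw [step1, hpart]
  have key : ∀ j, ∀ i ∈ A j,
      θ i * Real.log (θ i / thetaHat A α N N' x (fun j => ∑ i ∈ A j, y' i) i)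
        - θ i * Real.log (θ i / thetaTilde α N x i)
      = θ i * ((Real.log ((↑(∑ i ∈ A j, x i) : ℝ) + ∑ i ∈ A j, α i)
            - Real.log ((↑(∑ i ∈ A j, x i + ∑ i ∈ A j, y' i) : ℝ) + ∑ i ∈ A j, α i))
          + (Real.log ((N : ℝ) + (N' : ℝ) + αS) - Real.log ((N : ℝ) + αS))) := by
    intro j i hij
    rw [thetaHat_eq A hAdisj α N N' x _ hij]
    have h1 : 0 < α i + (x i : ℝ) := by have := hα i; positivity
    have h2 := hbb j
    have h3 : (0:ℝ) < (↑(∑ i ∈ A j, y' i) : ℝ) + ∑ r ∈ A j, ((x r : ℝ) + α r) := by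
      have : (0:ℝ) ≤ ↑(∑ i ∈ A j, y' i) := Nat.cast_nonneg _
      linarith
    have hθi := hθ i
    unfold thetaTilde
    have h4 : (0:ℝ) < (x i : ℝ) + α i := by have := hα i; positivity
    rw [Real.log_div (ne_of_gt hθi) (ne_of_gt (mul_pos (div_pos h1 h2) (div_pos h3 hdd))),
      Real.log_div (ne_of_gt hθi) (ne_of_gt (div_pos h4 hdN)),
      Real.log_mul (ne_of_gt (div_pos h1 h2)) (ne_of_gt (div_pos h3 hdd)),
      Real.log_div (ne_of_gt h1) (ne_of_gt h2),
      Real.log_div (ne_of_gt h3) (ne_of_gt hdd),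
      Real.log_div (ne_of_gt h4) (ne_of_gt hdN)]
    rw [← hbcast j, ← hecast j]
    have hxa : Real.log ((x i : ℝ) + α i) = Real.log (α i + (x i : ℝ)) := by rw [add_comm]
    rw [hxa]
    ring
  rw [Finset.sum_congr rfl (fun j _ => Finset.sum_congr rfl (fun i hij => key j i hij))]
  have inner : ∀ j, ∑ i ∈ A j, θ i * ((Real.log ((↑(∑ i ∈ A j, x i) : ℝ) + ∑ i ∈ A j, α i)
            - Real.log ((↑(∑ i ∈ A j, x i + ∑ i ∈ A j, y' i) : ℝ) + ∑ i ∈ A j, α i))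
          + (Real.log ((N : ℝ) + (N' : ℝ) + αS) - Real.log ((N : ℝ) + αS)))
      = (∑ i ∈ A j, θ i) * ((Real.log ((↑(∑ i ∈ A j, x i) : ℝ) + ∑ i ∈ A j, α i)
            - Real.log ((↑(∑ i ∈ A j, x i + ∑ i ∈ A j, y' i) : ℝ) + ∑ i ∈ A j, α i))
          + (Real.log ((N : ℝ) + (N' : ℝ) + αS) - Real.log ((N : ℝ) + αS))) := by
    intro j
    rw [Finset.sum_mul]
  rw [Finset.sum_congr rfl (fun j _ => inner j)]
  have hsum1 : ∑ j, ∑ i ∈ A j, θ i = 1 := by rw [← hpart θ, hθsum]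
  rw [Finset.sum_congr rfl (fun j (_ : j ∈ Finset.univ) => mul_add ((∑ i ∈ A j, θ i)) _ _),
    Finset.sum_add_distrib, ← Finset.sum_mul, hsum1, one_mul]

end KL



lemma binExp_const (p : ℝ) (M : ℕ) (c : ℝ) : binExp p M (fun _ => c) = c := by
  have : binExp p M (fun _ => c) = c * binExp p M (fun _ => 1) := by
    unfold binExp
    rw [Finset.mul_sum]
    apply Finset.sum_congr rfl
    intro s _
    ring
  rw [this, binExp_const_one, mul_one]

section Closed

variable {k m : ℕ} (hk : 2 ≤ k) (A : Fin (m + 1) → Finset (Fin k))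
  (hAne : ∀ j, (A j).Nonempty)
  (hAdisj : ∀ j j', j ≠ j' → Disjoint (A j) (A j'))
  (hAcover : ∀ i, ∃ j, i ∈ A j)
  (α : Fin k → ℝ) (hα : ∀ i, 0 < α i)
  (θ : Fin k → ℝ) (hθ : ∀ i, 0 < θ i) (hθsum : ∑ i, θ i = 1)

include hk hAne hAdisj hAcover hα hθ hθsum in
lemma riskDiff_closed (N N' : ℕ) :
    riskDiff A α θ N N'
      = (Real.log ((N : ℝ) + (N' : ℝ) + ∑ c, α c) - Real.log ((N : ℝ) + ∑ c, α c))
        + ∑ j, (∑ i ∈ A j, θ i) *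
            (binExp (∑ i ∈ A j, θ i) N (fun u => Real.log ((u : ℝ) + ∑ i ∈ A j, α i))
              - binExp (∑ i ∈ A j, θ i) (N + N') (fun u => Real.log ((u : ℝ) + ∑ i ∈ A j, α i))) := by
  set C : ℝ := Real.log ((N : ℝ) + (N' : ℝ) + ∑ c, α c) - Real.log ((N : ℝ) + ∑ c, α c) with hC
  have step1 : riskDiff A α θ N N'
      = ∑ x ∈ counts k N, ∑ y' ∈ counts k N',
          ((∑ j, ((∑ i ∈ A j, θ i) * (mpmf θ x * mpmf θ y' *
                Real.log ((↑(∑ i ∈ A j, x i) : ℝ) + ∑ i ∈ A j, α i))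
              - (∑ i ∈ A j, θ i) * (mpmf θ x * mpmf θ y' *
                Real.log ((↑(∑ i ∈ A j, x i + ∑ i ∈ A j, y' i) : ℝ) + ∑ i ∈ A j, α i))))
            + mpmf θ x * mpmf θ y' * C) := by
    unfold riskDiff
    apply Finset.sum_congr rfl
    intro x _
    apply Finset.sum_congr rfl
    intro y' _
    rw [KL_diff hk A hAne hAdisj hAcover α hα θ hθ hθsum N N' x y']
    rw [mul_add, Finset.mul_sum]
    congr 1
    apply Finset.sum_congr rfl
    intro j _
    ring
  rw [step1]
  rw [Finset.sum_congr rfl (fun x (_ : x ∈ counts k N) => Finset.sum_add_distrib),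
    Finset.sum_add_distrib]
  have termC : ∑ x ∈ counts k N, ∑ y' ∈ counts k N', mpmf θ x * mpmf θ y' * C = C := by
    have h1 : ∀ x : Fin k → ℕ, ∑ y' ∈ counts k N', mpmf θ x * mpmf θ y' * C
        = mpmf θ x * C := by
      intro x
      calc ∑ y' ∈ counts k N', mpmf θ x * mpmf θ y' * C
          = (mpmf θ x * C) * ∑ y' ∈ counts k N', mpmf θ y' := by
            rw [Finset.mul_sum]
            apply Finset.sum_congr rfl
            intro y' _
            ring
        _ = mpmf θ x * C := by rw [sum_mpmf θ hθsum N', mul_one]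
    rw [Finset.sum_congr rfl (fun x _ => h1 x), ← Finset.sum_mul, sum_mpmf θ hθsum N, one_mul]
  rw [termC]
  rw [add_comm]
  congr 1
  -- now the double sum of the j-sum
  rw [Finset.sum_congr rfl (fun x (_ : x ∈ counts k N) =>
    Finset.sum_comm (s := counts k N') (t := (Finset.univ : Finset (Fin (m+1))))),
    Finset.sum_comm (s := counts k N) (t := (Finset.univ : Finset (Fin (m+1))))]
  apply Finset.sum_congr rfl
  intro j _
  rw [Finset.sum_congr rfl (fun x (_ : x ∈ counts k N) => Finset.sum_sub_distrib _ _),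
    Finset.sum_sub_distrib]
  have t1 : ∑ x ∈ counts k N, ∑ y' ∈ counts k N',
      (∑ i ∈ A j, θ i) * (mpmf θ x * mpmf θ y' *
        Real.log ((↑(∑ i ∈ A j, x i) : ℝ) + ∑ i ∈ A j, α i))
      = (∑ i ∈ A j, θ i) * binExp (∑ i ∈ A j, θ i) N (fun u => Real.log ((u : ℝ) + ∑ i ∈ A j, α i)) := by
    rw [← double_marg θ hθsum (A j) N N' (fun u => Real.log ((u : ℝ) + ∑ i ∈ A j, α i)),
      Finset.mul_sum]
    apply Finset.sum_congr rfl
    intro x _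
    rw [Finset.mul_sum]
  have t2 : ∑ x ∈ counts k N, ∑ y' ∈ counts k N',
      (∑ i ∈ A j, θ i) * (mpmf θ x * mpmf θ y' *
        Real.log ((↑(∑ i ∈ A j, x i + ∑ i ∈ A j, y' i) : ℝ) + ∑ i ∈ A j, α i))
      = (∑ i ∈ A j, θ i) * binExp (∑ i ∈ A j, θ i) (N + N') (fun u => Real.log ((u : ℝ) + ∑ i ∈ A j, α i)) := by
    rw [← conv_marg θ hθsum (A j) N N' (fun u => Real.log ((u : ℝ) + ∑ i ∈ A j, α i)),
      Finset.mul_sum]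
    apply Finset.sum_congr rfl
    intro x _
    rw [Finset.mul_sum]
  linear_combination t1 - t2

end Closed


/-- **Lemma 2 (second equality).** The risk difference telescopes:
`Δ_θ(N, N') = Σ_{u=1}^{N'} Δ_θ(N + u − 1, 1)`. -/
theorem risk_difference_telescoping {k m : ℕ} (hk : 2 ≤ k)
    (A : Fin (m + 1) → Finset (Fin k))
    (hAne : ∀ j, (A j).Nonempty)
    (hAdisj : ∀ j j', j ≠ j' → Disjoint (A j) (A j'))
    (hAcover : ∀ i, ∃ j, i ∈ A j)
    (α : Fin k → ℝ) (hα : ∀ i, 0 < α i)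
    (θ : Fin k → ℝ) (hθ : ∀ i, 0 < θ i) (hθsum : ∑ i, θ i = 1)
    (N N' : ℕ) (hN' : 1 ≤ N') :
    riskDiff A α θ N N' = ∑ u ∈ Finset.Icc 1 N', riskDiff A α θ (N + u - 1) 1 := by
  set G : Fin (m + 1) → ℕ → ℝ := fun j M =>
    binExp (∑ i ∈ A j, θ i) M (fun u => Real.log ((u : ℝ) + ∑ i ∈ A j, α i)) with hG
  have closed : ∀ M M' : ℕ, riskDiff A α θ M M'
      = (Real.log ((M : ℝ) + (M' : ℝ) + ∑ c, α c) - Real.log ((M : ℝ) + ∑ c, α c))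
        + ∑ j, (∑ i ∈ A j, θ i) * (G j M - G j (M + M')) :=
    fun M M' => riskDiff_closed hk A hAne hAdisj hAcover α hα θ hθ hθsum M M'
  rw [closed N N']
  have reindex : ∑ u ∈ Finset.Icc 1 N', riskDiff A α θ (N + u - 1) 1
      = ∑ i ∈ Finset.range N', riskDiff A α θ (N + i) 1 := by
    rw [← Finset.Ico_add_one_right_eq_Icc, Finset.sum_Ico_eq_sum_range]
    apply Finset.sum_congr (by norm_num)
    intro i _
    congr 1
    omega
  rw [reindex]
  have expand : ∀ i : ℕ, riskDiff A α θ (N + i) 1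
      = (Real.log ((↑(N + i + 1) : ℝ) + ∑ c, α c) - Real.log ((↑(N + i) : ℝ) + ∑ c, α c))
        + ∑ j, (∑ i' ∈ A j, θ i') * (G j (N + i) - G j (N + i + 1)) := by
    intro i
    rw [closed (N + i) 1]
    congr 2
    push_cast
    ring
  rw [Finset.sum_congr rfl (fun i _ => expand i), Finset.sum_add_distrib]
  congr 1
  · -- telescoping of the log part
    have h := Finset.sum_range_sub (f := fun i => Real.log ((↑(N + i) : ℝ) + ∑ c, α c)) N'
    simp only [show ∀ i : ℕ, N + (i + 1) = N + i + 1 from fun i => rfl, Nat.add_zero] at h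
    rw [h]
    push_cast
    ring
  · -- telescoping of the binExp part
    rw [Finset.sum_comm]
    apply Finset.sum_congr rfl
    intro j _
    rw [← Finset.mul_sum]
    congr 1
    have h := Finset.sum_range_sub' (f := fun i => G j (N + i)) N'
    simp only [show ∀ i : ℕ, N + (i + 1) = N + i + 1 from fun i => rfl, Nat.add_zero] at h
    rw [h]
end
end

section
/- Let n ∈ ℕ and h : ℕ → ℝ, with the convention h(−1) = 0. Then for every θ ∈ (0,1), the derivative in θ of the binomial expectation E[h(X)] = Σ_{x=0}^n C(n,x) θ^x (1−θ)^{n−x} h(x) satisfies d/dθ E[h(X)] = (1/θ) · E[X · (h(X) − h(X−1))], i.e. d/dθ Σ_{x=0}^n C(n,x) θ^x (1−θ)^{n−x} h(x) = (1/θ) Σ_{x=0}^n C(n,x) θ^x (1−θ)^{n−x} · x · (h(x) − h(x−1)). -/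
open Finset

noncomputable section

/-- For `X ~ Binomial(n, θ)` and `h : ℕ → ℝ` extended by the convention `h(−1) = 0`,
`d/dθ E[h(X)] = (1/θ) E[X (h(X) − h(X−1))]`. -/
theorem deriv_binomial_expectation (n : ℕ) (h : ℤ → ℝ) (hneg : h (-1) = 0)
    (θ : ℝ) (hθ : θ ∈ Set.Ioo (0 : ℝ) 1) :
    deriv (fun p : ℝ => ∑ x ∈ Finset.range (n + 1),
        (n.choose x : ℝ) * p ^ x * (1 - p) ^ (n - x) * h (x : ℤ)) θ =
      (1 / θ) * ∑ x ∈ Finset.range (n + 1),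
        (n.choose x : ℝ) * θ ^ x * (1 - θ) ^ (n - x) *
          ((x : ℝ) * (h (x : ℤ) - h ((x : ℤ) - 1))) := by
  obtain ⟨hθ0, hθ1⟩ := hθ
  have hθ0' : θ ≠ 0 := ne_of_gt hθ0
  -- compute the derivative of each term
  have key : ∀ x ∈ Finset.range (n + 1),
      HasDerivAt (fun p : ℝ => (n.choose x : ℝ) * p ^ x * (1 - p) ^ (n - x) * h (x : ℤ))
        (((n.choose x : ℝ) * ((x : ℝ) * θ ^ (x - 1)) * (1 - θ) ^ (n - x)
          + (n.choose x : ℝ) * θ ^ x * (((n - x : ℕ) : ℝ) * (1 - θ) ^ (n - x - 1) * (-1)))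
          * h (x : ℤ)) θ := by
    intro x _
    have h1 : HasDerivAt (fun p : ℝ => (n.choose x : ℝ) * p ^ x)
        ((n.choose x : ℝ) * ((x : ℝ) * θ ^ (x - 1))) θ := (hasDerivAt_pow x θ).const_mul _
    have h2 : HasDerivAt (fun p : ℝ => (1 - p) ^ (n - x))
        (((n - x : ℕ) : ℝ) * (1 - θ) ^ (n - x - 1) * (-1)) θ := by
      simpa using ((hasDerivAt_id θ).const_sub 1).fun_pow (n - x)
    exact (h1.mul h2).mul_const _
  rw [(HasDerivAt.fun_sum key).deriv, eq_comm, one_div, inv_mul_eq_iff_eq_mul₀ hθ0', mul_comm,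
    Finset.sum_mul]
  -- simplify θ * θ^(x-1) * x
  have pow_shift : ∀ x : ℕ, (x : ℝ) * θ ^ (x - 1) * θ = (x : ℝ) * θ ^ x := by
    intro x
    cases x with
    | zero => simp
    | succ m => simp [pow_succ]; ring
  have step1 : ∀ x ∈ Finset.range (n + 1),
      (((n.choose x : ℝ) * ((x : ℝ) * θ ^ (x - 1)) * (1 - θ) ^ (n - x)
          + (n.choose x : ℝ) * θ ^ x * (((n - x : ℕ) : ℝ) * (1 - θ) ^ (n - x - 1) * (-1)))
          * h (x : ℤ)) * θ =
      (n.choose x : ℝ) * θ ^ x * (1 - θ) ^ (n - x) * ((x : ℝ) * h (x : ℤ))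
        - ((n - x : ℕ) : ℝ) * (n.choose x : ℝ) * θ ^ x * (1 - θ) ^ (n - x - 1) * h (x : ℤ) * θ := by
    intro x _
    linear_combination ((n.choose x : ℝ) * (1 - θ) ^ (n - x) * h (x : ℤ)) * pow_shift x
  rw [Finset.sum_congr rfl step1]
  have step2 : ∀ x ∈ Finset.range (n + 1),
      (n.choose x : ℝ) * θ ^ x * (1 - θ) ^ (n - x) * ((x : ℝ) * (h (x : ℤ) - h ((x : ℤ) - 1))) =
      (n.choose x : ℝ) * θ ^ x * (1 - θ) ^ (n - x) * ((x : ℝ) * h (x : ℤ))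
        - (n.choose x : ℝ) * θ ^ x * (1 - θ) ^ (n - x) * ((x : ℝ) * h ((x : ℤ) - 1)) := by
    intro x _; ring
  rw [Finset.sum_congr rfl step2, Finset.sum_sub_distrib, Finset.sum_sub_distrib]
  congr 1
  rw [Finset.sum_range_succ', Finset.sum_range_succ]
  simp only [Nat.sub_self, Nat.cast_zero, zero_mul, mul_zero, add_zero, zero_sub, neg_zero]
  refine Finset.sum_congr rfl fun i hi => ?_
  have hi' : i < n := Finset.mem_range.mp hi
  have hc : ((n.choose (i + 1) : ℝ) * ((i : ℝ) + 1)) = (n.choose i : ℝ) * ((n - i : ℕ) : ℝ) := by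
    exact_mod_cast congrArg (Nat.cast : ℕ → ℝ) (Nat.choose_succ_right_eq n i)
  rw [show n - (i + 1) = n - i - 1 from by omega]
  simp only [Nat.cast_add, Nat.cast_one, add_sub_cancel_right]
  linear_combination (θ ^ (i + 1) * (1 - θ) ^ (n - i - 1) * h (i : ℤ)) * hc
end
end

section
/- Let n ∈ ℕ and h : ℕ → ℝ, with the convention h(x) = 0 for x < 0. Then for every θ ∈ (0,1), d²/dθ² ( θ · E[h(X)] ) = (1/θ) · E[ X · ( (X+1)·h(X) − 2X·h(X−1) + (X−1)·h(X−2) ) ], where E[h(X)] = Σ_{x=0}^n C(n,x) θ^x (1−θ)^{n−x} h(x). -/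
open Finset

noncomputable section

private lemma term_hasDerivAt (k m : ℕ) (p : ℝ) :
    HasDerivAt (fun q : ℝ => q ^ k * (1 - q) ^ m)
      ((k : ℝ) * p ^ (k - 1) * (1 - p) ^ m - (m : ℝ) * p ^ k * (1 - p) ^ (m - 1)) p := by
  have h1 : HasDerivAt (fun q : ℝ => q ^ k) ((k : ℝ) * p ^ (k - 1)) p := hasDerivAt_pow k p
  have h2 : HasDerivAt (fun q : ℝ => (1 - q) ^ m)
      ((m : ℝ) * (1 - p) ^ (m - 1) * (-1)) p :=
    ((hasDerivAt_id p).const_sub 1).pow m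
  have := h1.mul h2
  refine this.congr_deriv ?_
  ring

/-- For `X ~ Binomial(n, θ)` and `h : ℕ → ℝ` extended by `h(x) = 0` for `x < 0`,
`d²/dθ² (θ E[h(X)]) = (1/θ) E[X ((X+1) h(X) − 2X h(X−1) + (X−1) h(X−2))]`. -/
theorem deriv2_mul_binomial_expectation (n : ℕ) (h : ℤ → ℝ)
    (hneg : ∀ z : ℤ, z < 0 → h z = 0)
    (θ : ℝ) (hθ : θ ∈ Set.Ioo (0 : ℝ) 1) :
    deriv (deriv (fun p : ℝ => p * ∑ x ∈ Finset.range (n + 1),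
        (n.choose x : ℝ) * p ^ x * (1 - p) ^ (n - x) * h (x : ℤ))) θ =
      (1 / θ) * ∑ x ∈ Finset.range (n + 1),
        (n.choose x : ℝ) * θ ^ x * (1 - θ) ^ (n - x) *
          ((x : ℝ) * (((x : ℝ) + 1) * h (x : ℤ) - 2 * (x : ℝ) * h ((x : ℤ) - 1) +
            ((x : ℝ) - 1) * h ((x : ℤ) - 2))) := by
  -- Step 1: rewrite the function as a sum of monomial terms
  have hF : (fun p : ℝ => p * ∑ x ∈ Finset.range (n + 1),
        (n.choose x : ℝ) * p ^ x * (1 - p) ^ (n - x) * h (x : ℤ))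
      = fun p : ℝ => ∑ x ∈ Finset.range (n + 1),
          ((n.choose x : ℝ) * h (x:ℤ)) * (p ^ (x+1) * (1 - p) ^ (n - x)) := by
    funext p
    rw [Finset.mul_sum]
    exact Finset.sum_congr rfl fun x _ => by ring
  rw [hF]
  -- Step 2: first derivative
  have hd1 : (deriv fun p : ℝ => ∑ x ∈ Finset.range (n + 1),
        ((n.choose x : ℝ) * h (x:ℤ)) * (p ^ (x+1) * (1 - p) ^ (n - x)))
      = fun q : ℝ => ∑ x ∈ Finset.range (n + 1),
          (((n.choose x : ℝ) * h (x:ℤ) * ((x:ℝ)+1)) * (q ^ x * (1 - q) ^ (n - x))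
            - ((n.choose x : ℝ) * h (x:ℤ) * ((n-x : ℕ):ℝ)) * (q ^ (x+1) * (1 - q) ^ (n - x - 1))) := by
    funext q
    have H : HasDerivAt (fun p : ℝ => ∑ x ∈ Finset.range (n + 1),
          ((n.choose x : ℝ) * h (x:ℤ)) * (p ^ (x+1) * (1 - p) ^ (n - x)))
        (∑ x ∈ Finset.range (n + 1), ((n.choose x : ℝ) * h (x:ℤ)) *
          (((x+1 : ℕ):ℝ) * q ^ (x+1-1) * (1 - q) ^ (n - x)
            - ((n-x : ℕ):ℝ) * q ^ (x+1) * (1 - q) ^ (n - x - 1))) q :=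
      HasDerivAt.fun_sum fun x _ =>
        (term_hasDerivAt (x+1) (n-x) q).const_mul ((n.choose x : ℝ) * h (x:ℤ))
    rw [H.deriv]
    exact Finset.sum_congr rfl fun x _ => by push_cast [Nat.add_sub_cancel]; ring
  rw [hd1]
  -- Step 3: second derivative
  have H2 : HasDerivAt (fun q : ℝ => ∑ x ∈ Finset.range (n + 1),
        (((n.choose x : ℝ) * h (x:ℤ) * ((x:ℝ)+1)) * (q ^ x * (1 - q) ^ (n - x))
          - ((n.choose x : ℝ) * h (x:ℤ) * ((n-x : ℕ):ℝ)) * (q ^ (x+1) * (1 - q) ^ (n - x - 1))))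
      (∑ x ∈ Finset.range (n + 1),
        (((n.choose x : ℝ) * h (x:ℤ) * ((x:ℝ)+1)) *
            ((x:ℝ) * θ ^ (x-1) * (1-θ) ^ (n-x) - ((n-x:ℕ):ℝ) * θ ^ x * (1-θ) ^ (n-x-1))
          - ((n.choose x : ℝ) * h (x:ℤ) * ((n-x : ℕ):ℝ)) *
            (((x+1:ℕ):ℝ) * θ ^ (x+1-1) * (1-θ) ^ (n-x-1)
              - ((n-x-1:ℕ):ℝ) * θ ^ (x+1) * (1-θ) ^ (n-x-1-1)))) θ :=
    HasDerivAt.fun_sum fun x _ =>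
      ((term_hasDerivAt x (n-x) θ).const_mul ((n.choose x : ℝ) * h (x:ℤ) * ((x:ℝ)+1))).sub
        ((term_hasDerivAt (x+1) (n-x-1) θ).const_mul ((n.choose x : ℝ) * h (x:ℤ) * ((n-x : ℕ):ℝ)))
  rw [H2.deriv]
  -- Step 4: algebraic identification with the right-hand side
  have hθ0 : θ ≠ 0 := ne_of_gt hθ.1
  set f1 : ℕ → ℝ := fun x => (n.choose x : ℝ) * h (x:ℤ) * ((x:ℝ)*((x:ℝ)+1)) * θ^(x-1) * (1-θ)^(n-x) with hf1
  set f2 : ℕ → ℝ := fun x => (n.choose x : ℝ) * h (x:ℤ) * (2*((x:ℝ)+1)*((n-x:ℕ):ℝ)) * θ^x * (1-θ)^(n-x-1) with hf2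
  set f3 : ℕ → ℝ := fun x => (n.choose x : ℝ) * h (x:ℤ) * (((n-x:ℕ):ℝ)*((n-x-1:ℕ):ℝ)) * θ^(x+1) * (1-θ)^(n-x-1-1) with hf3
  set g1 : ℕ → ℝ := fun x => (1/θ) * ((n.choose x : ℝ) * θ^x * (1-θ)^(n-x) * ((x:ℝ)*(((x:ℝ)+1)*h (x:ℤ)))) with hg1
  set g2 : ℕ → ℝ := fun x => (1/θ) * ((n.choose x : ℝ) * θ^x * (1-θ)^(n-x) * ((x:ℝ)*(2*(x:ℝ)*h ((x:ℤ)-1)))) with hg2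
  set g3 : ℕ → ℝ := fun x => (1/θ) * ((n.choose x : ℝ) * θ^x * (1-θ)^(n-x) * ((x:ℝ)*(((x:ℝ)-1)*h ((x:ℤ)-2)))) with hg3
  have key1 : ∑ x ∈ Finset.range (n+1), g1 x = ∑ x ∈ Finset.range (n+1), f1 x := by
    refine Finset.sum_congr rfl fun x _ => ?_
    cases x with
    | zero => simp [hg1, hf1]
    | succ k =>
      simp only [hg1, hf1, Nat.add_sub_cancel, pow_succ]
      push_cast
      field_simp
  have key2 : ∑ x ∈ Finset.range (n+1), g2 x = ∑ x ∈ Finset.range (n+1), f2 x := by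
    have e1 : ∑ x ∈ Finset.range (n+2), g2 x = ∑ x ∈ Finset.range (n+1), g2 x := by
      rw [Finset.sum_range_succ]
      have : (n.choose (n+1) : ℝ) = 0 := by
        simp [Nat.choose_eq_zero_of_lt (Nat.lt_succ_self n)]
      simp [hg2, this]
    rw [← e1, Finset.sum_range_succ']
    have hz : g2 0 = 0 := by simp [hg2]
    rw [hz, add_zero]
    refine Finset.sum_congr rfl fun x _ => ?_
    have hc : ((n.choose (x+1)):ℝ) * ((x:ℝ)+1) = (n.choose x:ℝ) * ((n-x:ℕ):ℝ) := by
      exact_mod_cast congrArg (Nat.cast : ℕ → ℝ) (Nat.choose_succ_right_eq n x)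
    have harg : ((x+1:ℕ):ℤ) - 1 = (x:ℤ) := by push_cast; ring
    have hexp : n - (x+1) = n - x - 1 := by rw [Nat.sub_sub]
    simp only [hg2, hf2, harg, hexp, pow_succ]
    push_cast
    field_simp
    linear_combination ((1-θ)^(n-x-1) * h (x:ℤ)) * hc
  have key3 : ∑ x ∈ Finset.range (n+1), g3 x = ∑ x ∈ Finset.range (n+1), f3 x := by
    have c1 : (n.choose (n+1) : ℝ) = 0 := by
      simp [Nat.choose_eq_zero_of_lt (Nat.lt_succ_self n)]
    have c2 : (n.choose (n+2) : ℝ) = 0 := by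
      simp [Nat.choose_eq_zero_of_lt (by omega : n < n + 2)]
    have e1 : ∑ x ∈ Finset.range (n+3), g3 x = ∑ x ∈ Finset.range (n+1), g3 x := by
      rw [show n+3 = (n+2)+1 from rfl, Finset.sum_range_succ, Finset.sum_range_succ]
      simp [hg3, c1, c2]
    rw [← e1, Finset.sum_range_succ', Finset.sum_range_succ']
    have hz0 : g3 0 = 0 := by simp [hg3]
    have hz1 : g3 (0+1) = 0 := by simp [hg3]
    rw [hz0, hz1, add_zero, add_zero]
    refine Finset.sum_congr rfl fun x _ => ?_
    have hc1 : ((n.choose (x+1)):ℝ) * ((x:ℝ)+1) = (n.choose x:ℝ) * ((n-x:ℕ):ℝ) := by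
      exact_mod_cast congrArg (Nat.cast : ℕ → ℝ) (Nat.choose_succ_right_eq n x)
    have hc2 : ((n.choose (x+2)):ℝ) * ((x:ℝ)+2) = (n.choose (x+1):ℝ) * ((n-(x+1):ℕ):ℝ) := by
      exact_mod_cast congrArg (Nat.cast : ℕ → ℝ) (Nat.choose_succ_right_eq n (x+1))
    have harg : ((x+1+1:ℕ):ℤ) - 2 = (x:ℤ) := by push_cast; ring
    have hexp : n - (x+1+1) = n - x - 1 - 1 := by omega
    have hexp2 : n - (x+1) = n - x - 1 := by omega
    rw [hexp2] at hc2
    simp only [hg3, hf3, harg, hexp, hexp2, pow_succ]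
    push_cast
    field_simp
    linear_combination ((1-θ)^(n-x-1-1) * h (x:ℤ)) *
        (((x:ℝ)+1) * hc2 + ((n-x-1:ℕ):ℝ) * hc1)
  calc ∑ x ∈ Finset.range (n + 1),
        (((n.choose x : ℝ) * h (x:ℤ) * ((x:ℝ)+1)) *
            ((x:ℝ) * θ ^ (x-1) * (1-θ) ^ (n-x) - ((n-x:ℕ):ℝ) * θ ^ x * (1-θ) ^ (n-x-1))
          - ((n.choose x : ℝ) * h (x:ℤ) * ((n-x : ℕ):ℝ)) *
            (((x+1:ℕ):ℝ) * θ ^ (x+1-1) * (1-θ) ^ (n-x-1)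
              - ((n-x-1:ℕ):ℝ) * θ ^ (x+1) * (1-θ) ^ (n-x-1-1)))
      = ∑ x ∈ Finset.range (n+1), (f1 x - f2 x + f3 x) := by
        refine Finset.sum_congr rfl fun x _ => ?_
        simp only [hf1, hf2, hf3, Nat.add_sub_cancel]
        push_cast
        ring
    _ = ∑ x ∈ Finset.range (n+1), f1 x - ∑ x ∈ Finset.range (n+1), f2 x
          + ∑ x ∈ Finset.range (n+1), f3 x := by
        rw [Finset.sum_add_distrib, Finset.sum_sub_distrib]
    _ = ∑ x ∈ Finset.range (n+1), g1 x - ∑ x ∈ Finset.range (n+1), g2 x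
          + ∑ x ∈ Finset.range (n+1), g3 x := by rw [key1, key2, key3]
    _ = ∑ x ∈ Finset.range (n+1), (g1 x - g2 x + g3 x) := by
        rw [Finset.sum_add_distrib, Finset.sum_sub_distrib]
    _ = (1 / θ) * ∑ x ∈ Finset.range (n + 1),
        (n.choose x : ℝ) * θ ^ x * (1 - θ) ^ (n - x) *
          ((x : ℝ) * (((x : ℝ) + 1) * h (x : ℤ) - 2 * (x : ℝ) * h ((x : ℤ) - 1) +
            ((x : ℝ) - 1) * h ((x : ℤ) - 2))) := by
        rw [Finset.mul_sum]
        refine Finset.sum_congr rfl fun x _ => ?_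
        simp only [hg1, hg2, hg3]
        ring
end
end

section
/- Let n ∈ ℕ and g : ℕ → ℝ, extended by g(x) = 0 for x < 0, and define g̃(x) = (x+2)(x+1)·g(x) for all integers x (so g̃(x) = 0 for x < 0). Then for every θ ∈ (0,1), d²/dθ² ( θ² · E[g(X)] ) = E[ g̃(X) − 2·g̃(X−1) + g̃(X−2) ], where E[g(X)] = Σ_{x=0}^n C(n,x) θ^x (1−θ)^{n−x} g(x). -/
open Finset

noncomputable section

/-- `g̃(x) = (x+2)(x+1) g(x)`. -/
def gTilde (g : ℤ → ℝ) (z : ℤ) : ℝ := ((z : ℝ) + 2) * ((z : ℝ) + 1) * g z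

private lemma hasDerivAt_base (a b : ℕ) (p : ℝ) :
    HasDerivAt (fun p : ℝ => p ^ a * (1 - p) ^ b)
      ((a : ℝ) * p ^ (a - 1) * (1 - p) ^ b - (b : ℝ) * p ^ a * (1 - p) ^ (b - 1)) p := by
  have h2 : HasDerivAt (fun p : ℝ => (1 - p) ^ b)
      (-((b : ℝ) * (1 - p) ^ (b - 1))) p := by
    have h := (hasDerivAt_pow b (1 - p)).comp p ((hasDerivAt_const p (1:ℝ)).sub (hasDerivAt_id p))
    simpa [Function.comp_def] using h
  have h := (hasDerivAt_pow a p).mul h2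
  refine h.congr_deriv ?_
  ring

private lemma sum_shift (n : ℕ) (F G : ℕ → ℝ) (h0 : F 0 = 0) (hn : G n = 0)
    (hstep : ∀ i, i < n → F (i + 1) = G i) :
    ∑ x ∈ Finset.range (n + 1), F x = ∑ x ∈ Finset.range (n + 1), G x := by
  rw [Finset.sum_range_succ' _ n, Finset.sum_range_succ, h0, hn, add_zero, add_zero]
  exact Finset.sum_congr rfl fun i hi => hstep i (Finset.mem_range.mp hi)

private lemma choose_cast (n i : ℕ) (hi : i < n) :
    ((n.choose (i+1) : ℝ)) * ((i:ℝ) + 1) = (n.choose i : ℝ) * ((n : ℝ) - i) := by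
  have h := Nat.choose_succ_right_eq n i
  have h2 := congrArg (Nat.cast : ℕ → ℝ) h
  push_cast [Nat.cast_sub hi.le] at h2
  linarith

/-- For `X ~ Binomial(n, θ)` and `g : ℕ → ℝ` extended by `g(x) = 0` for `x < 0`,
`d²/dθ² (θ² E[g(X)]) = E[g̃(X) − 2 g̃(X−1) + g̃(X−2)]` where `g̃(x) = (x+2)(x+1) g(x)`. -/
theorem deriv2_sq_mul_binomial_expectation (n : ℕ) (g : ℤ → ℝ)
    (hneg : ∀ z : ℤ, z < 0 → g z = 0)
    (θ : ℝ) (hθ : θ ∈ Set.Ioo (0 : ℝ) 1) :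
    deriv (deriv (fun p : ℝ => p ^ 2 * ∑ x ∈ Finset.range (n + 1),
        (n.choose x : ℝ) * p ^ x * (1 - p) ^ (n - x) * g (x : ℤ))) θ =
      ∑ x ∈ Finset.range (n + 1),
        (n.choose x : ℝ) * θ ^ x * (1 - θ) ^ (n - x) *
          (gTilde g (x : ℤ) - 2 * gTilde g ((x : ℤ) - 1) + gTilde g ((x : ℤ) - 2)) := by
  have hfun : (fun p : ℝ => p ^ 2 * ∑ x ∈ Finset.range (n + 1),
      (n.choose x : ℝ) * p ^ x * (1 - p) ^ (n - x) * g (x : ℤ)) =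
      fun p : ℝ => ∑ x ∈ Finset.range (n + 1),
      ((n.choose x : ℝ) * g (x : ℤ)) * (p ^ (x + 2) * (1 - p) ^ (n - x)) := by
    funext p
    rw [Finset.mul_sum]
    refine Finset.sum_congr rfl fun x _ => ?_
    rw [pow_add]
    ring
  rw [hfun]
  have hd1 : ∀ p : ℝ, HasDerivAt (fun p : ℝ => ∑ x ∈ Finset.range (n + 1),
      ((n.choose x : ℝ) * g (x : ℤ)) * (p ^ (x + 2) * (1 - p) ^ (n - x)))
      (∑ x ∈ Finset.range (n + 1),
        (((n.choose x : ℝ) * g (x : ℤ)) * (((x : ℝ) + 2)) * (p ^ (x + 1) * (1 - p) ^ (n - x))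
          - ((n.choose x : ℝ) * g (x : ℤ)) * ((n - x : ℕ) : ℝ) *
              (p ^ (x + 2) * (1 - p) ^ (n - x - 1)))) p := by
    intro p
    refine HasDerivAt.fun_sum fun x _ => ?_
    have h := (hasDerivAt_base (x + 2) (n - x) p).const_mul ((n.choose x : ℝ) * g (x : ℤ))
    refine h.congr_deriv ?_
    have hx : x + 2 - 1 = x + 1 := rfl
    rw [hx]
    push_cast
    ring
  have hder1 : deriv (fun p : ℝ => ∑ x ∈ Finset.range (n + 1),
      ((n.choose x : ℝ) * g (x : ℤ)) * (p ^ (x + 2) * (1 - p) ^ (n - x))) =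
      fun p : ℝ => ∑ x ∈ Finset.range (n + 1),
        (((n.choose x : ℝ) * g (x : ℤ)) * (((x : ℝ) + 2)) * (p ^ (x + 1) * (1 - p) ^ (n - x))
          - ((n.choose x : ℝ) * g (x : ℤ)) * ((n - x : ℕ) : ℝ) *
              (p ^ (x + 2) * (1 - p) ^ (n - x - 1))) :=
    funext fun p => (hd1 p).deriv
  rw [hder1]
  have hd2 : HasDerivAt (fun p : ℝ => ∑ x ∈ Finset.range (n + 1),
      (((n.choose x : ℝ) * g (x : ℤ)) * (((x : ℝ) + 2)) * (p ^ (x + 1) * (1 - p) ^ (n - x))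
        - ((n.choose x : ℝ) * g (x : ℤ)) * ((n - x : ℕ) : ℝ) *
            (p ^ (x + 2) * (1 - p) ^ (n - x - 1))))
      (∑ x ∈ Finset.range (n + 1),
        ((((n.choose x : ℝ) * g (x : ℤ)) * (((x : ℝ) + 2))) *
            (((x + 1 : ℕ) : ℝ) * θ ^ (x + 1 - 1) * (1 - θ) ^ (n - x)
              - ((n - x : ℕ) : ℝ) * θ ^ (x + 1) * (1 - θ) ^ (n - x - 1))
          - (((n.choose x : ℝ) * g (x : ℤ)) * ((n - x : ℕ) : ℝ)) *
            (((x + 2 : ℕ) : ℝ) * θ ^ (x + 2 - 1) * (1 - θ) ^ (n - x - 1)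
              - ((n - x - 1 : ℕ) : ℝ) * θ ^ (x + 2) * (1 - θ) ^ (n - x - 1 - 1)))) θ := by
    refine HasDerivAt.fun_sum fun x _ => ?_
    exact ((hasDerivAt_base (x + 1) (n - x) θ).const_mul
        (((n.choose x : ℝ) * g (x : ℤ)) * (((x : ℝ) + 2)))).sub
      ((hasDerivAt_base (x + 2) (n - x - 1) θ).const_mul
        (((n.choose x : ℝ) * g (x : ℤ)) * ((n - x : ℕ) : ℝ)))
  rw [hd2.deriv]

  -- sum algebra
  set q : ℝ := 1 - θ with hq
  set A : ℕ → ℝ := fun x => (n.choose x : ℝ) * θ ^ x * q ^ (n - x) *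
      (((x:ℝ)+2)*((x:ℝ)+1)* g (x:ℤ)) with hA
  set B : ℕ → ℝ := fun x => (n.choose x : ℝ) * g (x:ℤ) *
      (((x:ℝ)+2) * ((n - x : ℕ) : ℝ) * θ ^ (x+1) * q ^ (n - x - 1)) with hB
  set Cc : ℕ → ℝ := fun x => (n.choose x : ℝ) * g (x:ℤ) *
      (((n - x : ℕ) : ℝ) * ((n - x - 1 : ℕ) : ℝ) * θ ^ (x+2) * q ^ (n - x - 2)) with hCc
  set B0 : ℕ → ℝ := fun x => (n.choose x : ℝ) * θ ^ x * q ^ (n - x) *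
      (((x:ℝ)+1) * (x:ℝ) * g ((x:ℤ)-1)) with hB0
  set C0 : ℕ → ℝ := fun x => (n.choose x : ℝ) * θ ^ x * q ^ (n - x) *
      ((x:ℝ) * ((x:ℝ)-1) * g ((x:ℤ)-2)) with hC0
  set M : ℕ → ℝ := fun i => (n.choose i : ℝ) * ((n - i : ℕ) : ℝ) * (i:ℝ) * θ ^ (i+1) *
      q ^ (n - i - 1) * g ((i:ℤ)-1) with hM
  have h1 : (∑ x ∈ Finset.range (n + 1),
        ((((n.choose x : ℝ) * g (x : ℤ)) * (((x : ℝ) + 2))) *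
            (((x + 1 : ℕ) : ℝ) * θ ^ (x + 1 - 1) * q ^ (n - x)
              - ((n - x : ℕ) : ℝ) * θ ^ (x + 1) * q ^ (n - x - 1))
          - (((n.choose x : ℝ) * g (x : ℤ)) * ((n - x : ℕ) : ℝ)) *
            (((x + 2 : ℕ) : ℝ) * θ ^ (x + 2 - 1) * q ^ (n - x - 1)
              - ((n - x - 1 : ℕ) : ℝ) * θ ^ (x + 2) * q ^ (n - x - 1 - 1)))) =
      ∑ x ∈ Finset.range (n + 1), (A x - 2 * B x + Cc x) := by
    refine Finset.sum_congr rfl fun x _ => ?_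
    have e1 : x + 1 - 1 = x := rfl
    have e2 : x + 2 - 1 = x + 1 := rfl
    have e3 : n - x - 1 - 1 = n - x - 2 := by omega
    rw [e1, e2, e3, hA, hB, hCc]
    push_cast
    ring
  have h2 : (∑ x ∈ Finset.range (n + 1),
      (n.choose x : ℝ) * θ ^ x * q ^ (n - x) *
        (gTilde g (x : ℤ) - 2 * gTilde g ((x : ℤ) - 1) + gTilde g ((x : ℤ) - 2))) =
      ∑ x ∈ Finset.range (n + 1), (A x - 2 * B0 x + C0 x) := by
    refine Finset.sum_congr rfl fun x _ => ?_
    rw [hA, hB0, hC0]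
    simp only [gTilde]
    push_cast
    ring
  rw [h1, h2]
  have hBs : ∑ x ∈ Finset.range (n + 1), B0 x = ∑ x ∈ Finset.range (n + 1), B x := by
    refine sum_shift n B0 B ?_ ?_ ?_
    · simp [hB0]
    · simp [hB]
    · intro i hi
      have hg : ((i + 1 : ℕ) : ℤ) - 1 = (i : ℤ) := by push_cast; ring
      have he : n - (i + 1) = n - i - 1 := by omega
      rw [hB0, hB]
      simp only [hg, he]
      rw [Nat.cast_sub hi.le]
      push_cast
      linear_combination (θ ^ (i+1) * q ^ (n-i-1) * (((i:ℝ)+2) * g (i:ℤ))) * choose_cast n i hi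
  have hCs : ∑ x ∈ Finset.range (n + 1), C0 x = ∑ x ∈ Finset.range (n + 1), Cc x := by
    have s1 : ∑ x ∈ Finset.range (n + 1), C0 x = ∑ x ∈ Finset.range (n + 1), M x := by
      refine sum_shift n C0 M ?_ ?_ ?_
      · simp [hC0]
      · simp [hM]
      · intro i hi
        have hg : ((i + 1 : ℕ) : ℤ) - 2 = (i : ℤ) - 1 := by push_cast; ring
        have he : n - (i + 1) = n - i - 1 := by omega
        rw [hC0, hM]
        simp only [hg, he]
        rw [Nat.cast_sub hi.le]
        push_cast
        linear_combination (θ ^ (i+1) * q ^ (n-i-1) * ((i:ℝ) * g ((i:ℤ)-1))) * choose_cast n i hi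
    have s2 : ∑ x ∈ Finset.range (n + 1), M x = ∑ x ∈ Finset.range (n + 1), Cc x := by
      refine sum_shift n M Cc ?_ ?_ ?_
      · simp [hM]
      · simp [hCc]
      · intro i hi
        have hg : ((i + 1 : ℕ) : ℤ) - 1 = (i : ℤ) := by push_cast; ring
        have he1 : n - (i + 1) - 1 = n - i - 2 := by omega
        have he2 : n - i - 1 = n - (i + 1) := by omega
        rw [hM, hCc]
        simp only [hg, he1, he2]
        rw [Nat.cast_sub hi, Nat.cast_sub hi.le]
        push_cast
        linear_combination (((n:ℝ) - i - 1) * θ ^ (i+2) * q ^ (n-i-2) * g (i:ℤ)) * choose_cast n i hi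
    exact s1.trans s2
  simp only [Finset.sum_add_distrib, Finset.sum_sub_distrib, ← Finset.mul_sum, hBs, hCs]
end
end

section
/- Let α̃ ≥ 2 be a real number and define g̃ : [0,∞) → ℝ by g̃(x) = (x² + 3x + 2) · log((1 + x + α̃)/(x + α̃)). Then for every x ≥ 0, the second derivative satisfies g̃''(x) ≥ 0. -/
open Finset

noncomputable section

lemma log_ge_pade {t : ℝ} (ht : 0 ≤ t) : 2 * t / (t + 2) ≤ Real.log (1 + t) := by
  set F : ℝ → ℝ := fun y => Real.log (1 + y) - 2 * y / (y + 2) with hF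
  have hderiv : ∀ s : ℝ, 0 ≤ s → HasDerivAt F (s ^ 2 / ((1 + s) * (s + 2) ^ 2)) s := by
    intro s hs
    have h1 : (0:ℝ) < 1 + s := by linarith
    have h2 : (0:ℝ) < s + 2 := by linarith
    have hlog : HasDerivAt (fun y : ℝ => Real.log (1 + y)) (1 + s)⁻¹ s := by
      have h := (Real.hasDerivAt_log h1.ne').comp s ((hasDerivAt_id s).const_add 1)
      exact h.congr_deriv (by simp)
    have hrat : HasDerivAt (fun y : ℝ => 2 * y / (y + 2)) (4 / (s + 2) ^ 2) s := by
      have h := ((hasDerivAt_id s).const_mul 2).div ((hasDerivAt_id s).add_const 2) h2.ne'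
      refine h.congr_deriv ?_
      simp only [id]
      field_simp
      ring
    have h := hlog.sub hrat
    refine h.congr_deriv ?_
    field_simp
    ring
  have hmono : MonotoneOn F (Set.Ici 0) := by
    apply monotoneOn_of_deriv_nonneg (convex_Ici 0)
    · exact fun s hs => (hderiv s hs).differentiableAt.continuousAt.continuousWithinAt
    · intro s hs
      rw [interior_Ici] at hs
      exact (hderiv s (le_of_lt hs)).differentiableAt.differentiableWithinAt
    · intro s hs
      rw [interior_Ici] at hs
      have hs' : 0 < s := hs
      rw [(hderiv s (le_of_lt hs)).deriv]
      have h1 : (0:ℝ) < 1 + s := by linarith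
      have h2 : (0:ℝ) < s + 2 := by linarith
      positivity
  have h0 : F 0 = 0 := by simp [hF]
  have := hmono (Set.mem_Ici.2 le_rfl) (Set.mem_Ici.2 ht) ht
  rw [h0] at this
  simp only [hF] at this
  linarith

lemma log_succ_ge {v : ℝ} (hv : 0 < v) : 2 / (2 * v + 1) ≤ Real.log (v + 1) - Real.log v := by
  have ht : (0:ℝ) ≤ 1 / v := by positivity
  have h := log_ge_pade ht
  have h1 : Real.log (1 + 1 / v) = Real.log (v + 1) - Real.log v := by
    rw [← Real.log_div (by positivity) hv.ne']
    congr 1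
    field_simp
  have h2 : 2 * (1 / v) / (1 / v + 2) = 2 / (2 * v + 1) := by
    rw [div_eq_div_iff (by positivity) (by positivity)]
    field_simp
    ring
  rw [h1, h2] at h
  exact h

/-- For `α̃ ≥ 2`, the function `g̃(x) = (x² + 3x + 2) log((1 + x + α̃)/(x + α̃))` is convex on
`[0, ∞)`: its second derivative is nonnegative there. -/
theorem gTilde_second_deriv_nonneg (a : ℝ) (ha : 2 ≤ a) (x : ℝ) (hx : 0 ≤ x) :
    0 ≤ deriv (deriv (fun s : ℝ =>
        (s ^ 2 + 3 * s + 2) * Real.log ((1 + s + a) / (s + a)))) x := by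
  set f : ℝ → ℝ := fun s =>
    (s ^ 2 + 3 * s + 2) * (Real.log (1 + s + a) - Real.log (s + a)) with hf
  set f1 : ℝ → ℝ := fun s =>
    (2 * s + 3) * (Real.log (1 + s + a) - Real.log (s + a)) +
      (s ^ 2 + 3 * s + 2) * ((1 + s + a)⁻¹ - (s + a)⁻¹) with hf1
  have hmem : Set.Ioi (-1 : ℝ) ∈ nhds x := Ioi_mem_nhds (by linarith)
  -- positivity facts on the open set
  have hpos : ∀ s : ℝ, s ∈ Set.Ioi (-1:ℝ) → 0 < s + a ∧ 0 < 1 + s + a := by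
    intro s hs
    have : (-1:ℝ) < s := hs
    constructor <;> linarith
  -- g = f on the open set
  have hgf : (fun s : ℝ => (s ^ 2 + 3 * s + 2) * Real.log ((1 + s + a) / (s + a)))
      =ᶠ[nhds x] f := by
    filter_upwards [hmem] with s hs
    obtain ⟨hv, hu⟩ := hpos s hs
    rw [hf]
    simp only
    rw [Real.log_div hu.ne' hv.ne']
  -- f has derivative f1 everywhere on the open set
  have hdf : ∀ s : ℝ, s ∈ Set.Ioi (-1:ℝ) → HasDerivAt f (f1 s) s := by
    intro s hs
    obtain ⟨hv, hu⟩ := hpos s hs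
    have hlog1 : HasDerivAt (fun y : ℝ => Real.log (1 + y + a)) (1 + s + a)⁻¹ s := by
      have h := (Real.hasDerivAt_log hu.ne').comp s
        (((hasDerivAt_id s).const_add 1).add_const a)
      exact h.congr_deriv (by simp)
    have hlog2 : HasDerivAt (fun y : ℝ => Real.log (y + a)) (s + a)⁻¹ s := by
      have h := (Real.hasDerivAt_log hv.ne').comp s ((hasDerivAt_id s).add_const a)
      exact h.congr_deriv (by simp)
    have hp : HasDerivAt (fun y : ℝ => y ^ 2 + 3 * y + 2) (2 * s + 3) s := by
      have h := (((hasDerivAt_pow 2 s).add ((hasDerivAt_id s).const_mul 3)).add_const 2)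
      refine h.congr_deriv ?_
      simp
    have h := hp.mul (hlog1.sub hlog2)
    refine h.congr_deriv ?_
    rfl
  -- hence deriv g = f1 eventually, so second derivatives agree with deriv f1 x
  have hd1 : deriv (fun s : ℝ => (s ^ 2 + 3 * s + 2) * Real.log ((1 + s + a) / (s + a)))
      =ᶠ[nhds x] f1 := by
    have h1 : deriv (fun s : ℝ => (s ^ 2 + 3 * s + 2) * Real.log ((1 + s + a) / (s + a)))
        =ᶠ[nhds x] deriv f := hgf.deriv
    have h2 : deriv f =ᶠ[nhds x] f1 := by
      filter_upwards [hmem] with s hs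
      exact (hdf s hs).deriv
    exact h1.trans h2
  rw [hd1.deriv_eq]
  -- now compute deriv f1 x
  have hv : 0 < x + a := by linarith
  have hu : 0 < 1 + x + a := by linarith
  set E : ℝ := 2 * (Real.log (1 + x + a) - Real.log (x + a)) +
      2 * ((2 * x + 3) * ((1 + x + a)⁻¹ - (x + a)⁻¹)) +
      (x ^ 2 + 3 * x + 2) * (-(1 / (1 + x + a) ^ 2) + 1 / (x + a) ^ 2) with hE
  have hdf1 : HasDerivAt f1 E x := by
    have hlog1 : HasDerivAt (fun y : ℝ => Real.log (1 + y + a)) (1 + x + a)⁻¹ x := by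
      have h := (Real.hasDerivAt_log hu.ne').comp x
        (((hasDerivAt_id x).const_add 1).add_const a)
      exact h.congr_deriv (by simp)
    have hlog2 : HasDerivAt (fun y : ℝ => Real.log (y + a)) (x + a)⁻¹ x := by
      have h := (Real.hasDerivAt_log hv.ne').comp x ((hasDerivAt_id x).add_const a)
      exact h.congr_deriv (by simp)
    have hinv1 : HasDerivAt (fun y : ℝ => (1 + y + a)⁻¹) (-(1 / (1 + x + a) ^ 2)) x := by
      have h := (((hasDerivAt_id x).const_add 1).add_const a).inv hu.ne'
      refine h.congr_deriv ?_
      simp only [id]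
      field_simp
    have hinv2 : HasDerivAt (fun y : ℝ => (y + a)⁻¹) (-(1 / (x + a) ^ 2)) x := by
      have h := ((hasDerivAt_id x).add_const a).inv hv.ne'
      refine h.congr_deriv ?_
      simp only [id]
      field_simp
    have hlin : HasDerivAt (fun y : ℝ => 2 * y + 3) 2 x := by
      have h := ((hasDerivAt_id x).const_mul 2).add_const 3
      exact h.congr_deriv (by simp)
    have hp : HasDerivAt (fun y : ℝ => y ^ 2 + 3 * y + 2) (2 * x + 3) x := by
      have h := (((hasDerivAt_pow 2 x).add ((hasDerivAt_id x).const_mul 3)).add_const 2)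
      refine h.congr_deriv ?_
      simp
    have h := (hlin.mul (hlog1.sub hlog2)).add (hp.mul (hinv1.sub hinv2))
    refine h.congr_deriv ?_
    rw [hE]
    simp only [Pi.sub_apply]
    ring
  rw [hdf1.deriv]
  -- final inequality
  have hL := log_succ_ge hv
  have h1ua : 1 + x + a = (x + a) + 1 := by ring
  have hFpoly : 0 ≤ 2 * ((2 / (2 * (x + a) + 1))) +
      2 * ((2 * x + 3) * ((1 + x + a)⁻¹ - (x + a)⁻¹)) +
      (x ^ 2 + 3 * x + 2) * (-(1 / (1 + x + a) ^ 2) + 1 / (x + a) ^ 2) := by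
    set d : ℝ := a - 2 with hd
    have hd0 : 0 ≤ d := by linarith
    have key : 2 * ((2 / (2 * (x + a) + 1))) +
        2 * ((2 * x + 3) * ((1 + x + a)⁻¹ - (x + a)⁻¹)) +
        (x ^ 2 + 3 * x + 2) * (-(1 / (1 + x + a) ^ 2) + 1 / (x + a) ^ 2) =
        (14 + 58*d + 66*d^2 + 28*d^3 + 4*d^4 + 13*x + 44*d*x + 36*d^2*x + 8*d^3*x
          + 3*x^2 + 8*d*x^2 + 4*d^2*x^2) /
        ((1 + x + a) ^ 2 * (x + a) ^ 2 * (2 * (x + a) + 1)) := by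
      have h2v : (0:ℝ) < 2 * (x + a) + 1 := by linarith
      have hu' : (1 + x + a) ≠ 0 := hu.ne'
      have hv' : (x + a) ≠ 0 := hv.ne'
      have h2v' : (2 * (x + a) + 1) ≠ 0 := h2v.ne'
      rw [hd]
      field_simp
      ring
    rw [key]
    have hnum : 0 ≤ 14 + 58*d + 66*d^2 + 28*d^3 + 4*d^4 + 13*x + 44*d*x + 36*d^2*x + 8*d^3*x
          + 3*x^2 + 8*d*x^2 + 4*d^2*x^2 := by positivity
    positivity
  calc (0:ℝ) ≤ _ := hFpoly
    _ ≤ E := by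
      rw [hE]
      have := hL
      rw [← h1ua] at this
      linarith

end
end

section
/- For every real α̃ ≥ 2, log(1 + 1/(1 + α̃)) − (2/3)·log(1 + 1/α̃) ≥ 0; equivalently, g̃(1) − 2·g̃(0) + g̃(−1) ≥ 0 where g̃(x) = (x² + 3x + 2)·log((1 + x + α̃)/(x + α̃)) and g̃(−1) = 0. -/
noncomputable section

/-- For `α̃ ≥ 2`, `log(1 + 1/(1 + α̃)) − (2/3) log(1 + 1/α̃) ≥ 0`; equivalently
`g̃(1) − 2 g̃(0) + g̃(−1) ≥ 0` for `g̃(x) = (x² + 3x + 2) log((1 + x + α̃)/(x + α̃))`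
with `g̃(−1) = 0`. -/
theorem log_inequality_at_one (a : ℝ) (ha : 2 ≤ a) :
    0 ≤ Real.log (1 + 1 / (1 + a)) - (2 / 3) * Real.log (1 + 1 / a) := by
  have ha0 : (0:ℝ) < a := by linarith
  have ha1 : (0:ℝ) < 1 + a := by linarith
  have hx : (0:ℝ) < 1 + 1 / a := by positivity
  have hy : (0:ℝ) < 1 + 1 / (1 + a) := by positivity
  have hpow : (1 + 1 / a) ^ 2 ≤ (1 + 1 / (1 + a)) ^ 3 := by
    have e1 : 1 + 1/a = (a+1)/a := by field_simp
    have e2 : 1 + 1/(1+a) = (a+2)/(1+a) := by field_simp; ring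
    rw [e1, e2, div_pow, div_pow, div_le_div_iff₀ (by positivity) (by positivity)]
    nlinarith [sq_nonneg a, sq_nonneg (a-2), pow_le_pow_left₀ (by norm_num : (0:ℝ) ≤ 2) ha 3,
      sq_nonneg (a*(a-2))]
  have := Real.log_le_log (by positivity) hpow
  rw [Real.log_pow, Real.log_pow] at this
  push_cast at this
  linarith
end
end

section
/- Let N ∈ ℕ and let α̃ ≥ 2 be a real number. Then the function G_{N,α̃} is convex on (0,1). -/
open Finset

noncomputable section

/-- `G_{N,α̃}(t) = t² E[−log(1 − 1/(1 + B + α̃))]` where `B ~ Binomial(N, t)`. -/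
def G (N : ℕ) (a t : ℝ) : ℝ :=
  t ^ 2 * ∑ x ∈ Finset.range (N + 1),
    (N.choose x : ℝ) * t ^ x * (1 - t) ^ (N - x) *
      (-Real.log (1 - 1 / (1 + (x : ℝ) + a)))

open Polynomial

noncomputable def Q (M : ℕ) (f : ℕ → ℝ) : ℝ[X] :=
  ∑ y ∈ Finset.range (M + 1), Polynomial.C (f y) * bernsteinPolynomial ℝ M y

lemma derivQ (M : ℕ) (f : ℕ → ℝ) :
    (Q (M + 1) f).derivative
      = Polynomial.C ((M : ℝ) + 1) * Q M (fun y => f (y + 1) - f y) := by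
  set b : ℕ → ℝ[X] := bernsteinPolynomial ℝ M with hbdef
  have hb : b (M + 1) = 0 := bernsteinPolynomial.eq_zero_of_lt ℝ (Nat.lt_succ_self M)
  have key : ∑ i ∈ Finset.range (M + 1), Polynomial.C (f (i + 1)) * b (i + 1)
      = ∑ i ∈ Finset.range (M + 1), Polynomial.C (f i) * b i - Polynomial.C (f 0) * b 0 := by
    have h1 := Finset.sum_range_succ' (fun i => Polynomial.C (f i) * b i) (M + 1)
    have h2 := Finset.sum_range_succ (fun i => Polynomial.C (f i) * b i) (M + 1)
    rw [hb, mul_zero, add_zero] at h2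
    rw [← h2, h1]
    ring
  unfold Q
  rw [Polynomial.derivative_sum, Finset.sum_range_succ' _ (M + 1)]
  have hds : ∀ i, Polynomial.derivative (Polynomial.C (f (i + 1)) * bernsteinPolynomial ℝ (M + 1) (i + 1))
      = Polynomial.C ((M : ℝ) + 1) * (Polynomial.C (f (i + 1)) * b i)
        - Polynomial.C ((M : ℝ) + 1) * (Polynomial.C (f (i + 1)) * b (i + 1)) := by
    intro i
    rw [Polynomial.derivative_C_mul, bernsteinPolynomial.derivative_succ]
    have : ((M + 1 : ℕ) : ℝ[X]) = Polynomial.C ((M : ℝ) + 1) := by push_cast; simp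
    simp only [Nat.add_sub_cancel, ← hbdef, this]
    ring
  rw [Finset.sum_congr rfl (fun i _ => hds i), Finset.sum_sub_distrib]
  simp only [← Finset.mul_sum]
  rw [key]
  have hd0 : Polynomial.derivative (Polynomial.C (f 0) * bernsteinPolynomial ℝ (M + 1) 0)
      = - (Polynomial.C ((M : ℝ) + 1) * (Polynomial.C (f 0) * b 0)) := by
    rw [Polynomial.derivative_C_mul, bernsteinPolynomial.derivative_zero]
    have : ((M + 1 : ℕ) : ℝ[X]) = Polynomial.C ((M : ℝ) + 1) := by push_cast; simp
    simp only [Nat.add_sub_cancel, ← hbdef, ← this]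
    ring
  have hsplit : ∀ i : ℕ, Polynomial.C ((M : ℝ) + 1) * (Polynomial.C (f (i + 1) - f i) * b i)
      = Polynomial.C ((M : ℝ) + 1) * (Polynomial.C (f (i + 1)) * b i)
        - Polynomial.C ((M : ℝ) + 1) * (Polynomial.C (f i) * b i) := by
    intro i; rw [map_sub]; ring
  rw [hd0]
  simp only [← hbdef]
  conv_rhs => rw [Finset.mul_sum, Finset.sum_congr rfl (fun i _ => hsplit i),
    Finset.sum_sub_distrib]
  simp only [← Finset.mul_sum]
  ring

lemma derivQ2 (M : ℕ) (f : ℕ → ℝ) :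
    (Q (M + 2) f).derivative.derivative
      = Polynomial.C (((M : ℝ) + 2) * ((M : ℝ) + 1))
        * Q M (fun y => f (y + 2) - 2 * f (y + 1) + f y) := by
  have h1 : (Q (M + 2) f).derivative
      = Polynomial.C ((M : ℝ) + 1 + 1) * Q (M + 1) (fun y => f (y + 1) - f y) := by
    have := derivQ (M + 1) f
    simpa using this
  rw [h1, Polynomial.derivative_C_mul, derivQ]
  have h2 : Q M (fun y => (f (y + 1 + 1) - f (y + 1)) - (f (y + 1) - f y))
      = Q M (fun y => f (y + 2) - 2 * f (y + 1) + f y) := by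
    unfold Q
    refine Finset.sum_congr rfl fun y _ => ?_
    congr 1
    · congr 1; ring
  rw [h2, ← mul_assoc, ← Polynomial.C_mul]
  ring_nf

lemma Q_eval (M : ℕ) (f : ℕ → ℝ) (t : ℝ) :
    (Q M f).eval t
      = ∑ y ∈ Finset.range (M + 1),
          f y * ((M.choose y : ℝ) * t ^ y * (1 - t) ^ (M - y)) := by
  unfold Q
  rw [Polynomial.eval_finset_sum]
  refine Finset.sum_congr rfl fun y _ => ?_
  simp [bernsteinPolynomial]

lemma bernstein_convex (M : ℕ) (f : ℕ → ℝ)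
    (hf : ∀ y, 0 ≤ f (y + 2) - 2 * f (y + 1) + f y) :
    ConvexOn ℝ (Set.Ioo (0 : ℝ) 1) (fun t => (Q (M + 2) f).eval t) := by
  have hderiv : deriv (fun t => (Q (M + 2) f).eval t)
      = fun t => ((Q (M + 2) f).derivative).eval t := by
    funext t; exact Polynomial.deriv _
  refine convexOn_of_deriv2_nonneg (convex_Ioo 0 1)
    ((Q (M + 2) f).continuousOn) ?_ ?_ ?_
  · exact fun x _ => ((Q (M + 2) f).differentiable.differentiableAt).differentiableWithinAt
  · intro x _
    rw [hderiv]
    exact ((Polynomial.differentiable _).differentiableAt).differentiableWithinAt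
  · intro x hx
    rw [interior_Ioo] at hx
    have h2 : deriv^[2] (fun t => (Q (M + 2) f).eval t) x
        = ((Q (M + 2) f).derivative.derivative).eval x := by
      rw [Function.iterate_succ, Function.iterate_one, Function.comp_apply, hderiv]
      exact Polynomial.deriv _
    rw [h2, derivQ2, Polynomial.eval_mul, Polynomial.eval_C, Q_eval]
    have hM : (0:ℝ) ≤ ((M : ℝ) + 2) * ((M : ℝ) + 1) := by positivity
    refine mul_nonneg hM (Finset.sum_nonneg fun y _ => ?_)
    have h01 : 0 < x ∧ x < 1 := ⟨hx.1, hx.2⟩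
    have : (0:ℝ) ≤ (M.choose y : ℝ) * x ^ y * (1 - x) ^ (M - y) := by
      have hx1 : (0:ℝ) ≤ 1 - x := by linarith [h01.2]
      have hx0 : (0:ℝ) ≤ x := le_of_lt h01.1
      exact mul_nonneg (mul_nonneg (Nat.cast_nonneg _) (pow_nonneg hx0 _)) (pow_nonneg hx1 _)
    exact mul_nonneg (hf y) this

lemma log_pade {x : ℝ} (hx : 0 ≤ x) : 2 * x / (x + 2) ≤ Real.log (1 + x) := by
  have key : MonotoneOn (fun x : ℝ => Real.log (1 + x) - 2 * x / (x + 2)) (Set.Ici 0) := by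
    apply monotoneOn_of_deriv_nonneg (convex_Ici 0)
    · apply ContinuousOn.sub
      · apply ContinuousOn.log
        · fun_prop
        · intro y hy; simp only [Set.mem_Ici] at hy; intro h; linarith
      · apply ContinuousOn.div
        · fun_prop
        · fun_prop
        · intro y hy; simp only [Set.mem_Ici] at hy; intro h; linarith
    · intro y hy
      rw [interior_Ici] at hy
      simp only [Set.mem_Ioi] at hy
      have h1 : (0:ℝ) < 1 + y := by linarith
      have h2 : (0:ℝ) < y + 2 := by linarith
      have hd : HasDerivAt (fun x : ℝ => Real.log (1 + x) - 2 * x / (x + 2))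
          (1 / (1 + y) - (2 * 1 * (y + 2) - 2 * y * 1) / (y + 2) ^ 2) y := by
        apply HasDerivAt.sub
        · have : HasDerivAt (fun x : ℝ => 1 + x) 1 y := (hasDerivAt_id y).const_add 1
          have h' := (Real.hasDerivAt_log h1.ne').comp y this
          simp at h' ⊢; exact h'
        · have h' := ((hasDerivAt_id y).const_mul 2).div ((hasDerivAt_id y).add_const 2) h2.ne'
          simp at h' ⊢; exact h'
      exact hd.differentiableAt.differentiableWithinAt
    · intro y hy
      rw [interior_Ici] at hy
      simp only [Set.mem_Ioi] at hy
      have h1 : (0:ℝ) < 1 + y := by linarith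
      have h2 : (0:ℝ) < y + 2 := by linarith
      have hd : HasDerivAt (fun x : ℝ => Real.log (1 + x) - 2 * x / (x + 2))
          (1 / (1 + y) - (2 * 1 * (y + 2) - 2 * y * 1) / (y + 2) ^ 2) y := by
        apply HasDerivAt.sub
        · have : HasDerivAt (fun x : ℝ => 1 + x) 1 y := (hasDerivAt_id y).const_add 1
          have h' := (Real.hasDerivAt_log h1.ne').comp y this
          simp at h' ⊢; exact h'
        · have h' := ((hasDerivAt_id y).const_mul 2).div ((hasDerivAt_id y).add_const 2) h2.ne'
          simp at h' ⊢; exact h'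
      rw [hd.deriv]
      rw [sub_nonneg, div_le_div_iff₀ (by positivity) h1]
      nlinarith [sq_nonneg y]
  have h0 := key (Set.self_mem_Ici) (Set.mem_Ici.2 hx) hx
  simp only [Real.log_one] at h0
  norm_num at h0
  linarith [h0]

lemma F_nonneg {y v : ℝ} (hy : 2 ≤ y) (hv : y ≤ v) :
    0 ≤ 4 * v ^ 2 * (v + 1) ^ 2 - 2 * (2 * y - 1) * (2 * v + 1) * v * (v + 1)
      + y * (y - 1) * (2 * v + 1) ^ 2 := by
  nlinarith [sq_nonneg (v - y), sq_nonneg (2 * v * (v + 1) - y * (2 * v + 1)), mul_nonneg (sub_nonneg.2 hv) (sub_nonneg.2 hv), sq_nonneg v, mul_nonneg (mul_nonneg (sub_nonneg.2 hv) (by linarith : (0:ℝ) ≤ y - 2)) (by linarith : (0:ℝ) ≤ v)]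

noncomputable def phi (a : ℝ) : ℝ → ℝ :=
  fun u => (u ^ 2 - u) * (Real.log (u - 1 + a) - Real.log (u - 2 + a))

noncomputable def psi (a : ℝ) : ℝ → ℝ :=
  fun u => (2 * u - 1) * (Real.log (u - 1 + a) - Real.log (u - 2 + a))
    + (u ^ 2 - u) * (1 / (u - 1 + a) - 1 / (u - 2 + a))

noncomputable def chi (a : ℝ) : ℝ → ℝ :=
  fun u => 2 * (Real.log (u - 1 + a) - Real.log (u - 2 + a))
    + 2 * (2 * u - 1) * (1 / (u - 1 + a) - 1 / (u - 2 + a))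
    + (u ^ 2 - u) * (1 / (u - 2 + a) ^ 2 - 1 / (u - 1 + a) ^ 2)

lemma hasDerivAt_phi {a : ℝ} (ha : 2 ≤ a) {u : ℝ} (hu : 3/2 < u) :
    HasDerivAt (phi a) (psi a u) u := by
  have h1 : (0:ℝ) < u - 1 + a := by linarith
  have h2 : (0:ℝ) < u - 2 + a := by linarith
  have hq : HasDerivAt (fun u : ℝ => u ^ 2 - u) (2 * u - 1) u := by
    have h' := (hasDerivAt_pow 2 u).sub (hasDerivAt_id u)
    simp at h' ⊢; exact h'
  have hl1 : HasDerivAt (fun u : ℝ => Real.log (u - 1 + a)) (1 / (u - 1 + a)) u := by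
    have h : HasDerivAt (fun u : ℝ => u - 1 + a) 1 u :=
      ((hasDerivAt_id u).sub_const 1).add_const a
    simpa [one_div] using h.log h1.ne'
  have hl2 : HasDerivAt (fun u : ℝ => Real.log (u - 2 + a)) (1 / (u - 2 + a)) u := by
    have h : HasDerivAt (fun u : ℝ => u - 2 + a) 1 u :=
      ((hasDerivAt_id u).sub_const 2).add_const a
    simpa [one_div] using h.log h2.ne'
  have := hq.mul (hl1.sub hl2)
  exact this

lemma hasDerivAt_psi {a : ℝ} (ha : 2 ≤ a) {u : ℝ} (hu : 3/2 < u) :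
    HasDerivAt (psi a) (chi a u) u := by
  have h1 : (0:ℝ) < u - 1 + a := by linarith
  have h2 : (0:ℝ) < u - 2 + a := by linarith
  have hq : HasDerivAt (fun u : ℝ => u ^ 2 - u) (2 * u - 1) u := by
    have h' := (hasDerivAt_pow 2 u).sub (hasDerivAt_id u)
    simp at h' ⊢; exact h'
  have hq2 : HasDerivAt (fun u : ℝ => 2 * u - 1) 2 u := by
    simpa using ((hasDerivAt_id u).const_mul 2).sub_const 1
  have hl1 : HasDerivAt (fun u : ℝ => Real.log (u - 1 + a)) (1 / (u - 1 + a)) u := by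
    have h : HasDerivAt (fun u : ℝ => u - 1 + a) 1 u :=
      ((hasDerivAt_id u).sub_const 1).add_const a
    simpa [one_div] using h.log h1.ne'
  have hl2 : HasDerivAt (fun u : ℝ => Real.log (u - 2 + a)) (1 / (u - 2 + a)) u := by
    have h : HasDerivAt (fun u : ℝ => u - 2 + a) 1 u :=
      ((hasDerivAt_id u).sub_const 2).add_const a
    simpa [one_div] using h.log h2.ne'
  have hi1 : HasDerivAt (fun u : ℝ => 1 / (u - 1 + a)) (-(1 / (u - 1 + a) ^ 2)) u := by
    have h : HasDerivAt (fun u : ℝ => u - 1 + a) 1 u :=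
      ((hasDerivAt_id u).sub_const 1).add_const a
    have h' := h.inv h1.ne'
    simp [one_div, neg_div] at h' ⊢; exact h'
  have hi2 : HasDerivAt (fun u : ℝ => 1 / (u - 2 + a)) (-(1 / (u - 2 + a) ^ 2)) u := by
    have h : HasDerivAt (fun u : ℝ => u - 2 + a) 1 u :=
      ((hasDerivAt_id u).sub_const 2).add_const a
    have h' := h.inv h2.ne'
    simp [one_div, neg_div] at h' ⊢; exact h'
  have := (hq2.mul (hl1.sub hl2)).add (hq.mul (hi1.sub hi2))
  refine this.congr_deriv ?_
  unfold chi
  simp only [Pi.sub_apply]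
  ring

lemma chi_nonneg {a : ℝ} (ha : 2 ≤ a) {u : ℝ} (hu : 2 ≤ u) : 0 ≤ chi a u := by
  set v : ℝ := u - 2 + a with hvdef
  have hv : 2 ≤ v := by simp only [hvdef]; linarith
  have hv0 : (0:ℝ) < v := by linarith
  have huv : u ≤ v := by simp only [hvdef]; linarith
  have hu1 : u - 1 + a = v + 1 := by simp only [hvdef]; ring
  have hL : 2 / (2 * v + 1) ≤ Real.log (v + 1) - Real.log v := by
    have h := log_pade (x := 1 / v) (by positivity)
    have e1 : 1 + 1 / v = (v + 1) / v := by field_simp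
    have e2 : Real.log ((v + 1) / v) = Real.log (v + 1) - Real.log v :=
      Real.log_div (by linarith) hv0.ne'
    have e3 : 2 * (1 / v) / (1 / v + 2) = 2 / (2 * v + 1) := by
      rw [div_eq_div_iff (by positivity) (by positivity)]
      field_simp
      ring
    rw [e1, e2, e3] at h
    exact h
  have hF := F_nonneg (y := u) (v := v) hu huv
  have key : 0 ≤ 4 / (2 * v + 1) + (2 * (2 * u - 1) * (1 / (v + 1) - 1 / v)
      + (u ^ 2 - u) * (1 / v ^ 2 - 1 / (v + 1) ^ 2)) := by
    have heq : 4 / (2 * v + 1) + (2 * (2 * u - 1) * (1 / (v + 1) - 1 / v)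
        + (u ^ 2 - u) * (1 / v ^ 2 - 1 / (v + 1) ^ 2))
        = (4 * v ^ 2 * (v + 1) ^ 2 - 2 * (2 * u - 1) * (2 * v + 1) * v * (v + 1)
          + u * (u - 1) * (2 * v + 1) ^ 2) / (v ^ 2 * (v + 1) ^ 2 * (2 * v + 1)) := by
      field_simp
      ring
    rw [heq]
    exact div_nonneg hF (by positivity)
  have h4 : (4:ℝ) / (2 * v + 1) = 2 * (2 / (2 * v + 1)) := by ring
  unfold chi
  rw [hu1, ← hvdef]
  linarith [hL, key, h4]

lemma phi_convexOn {a : ℝ} (ha : 2 ≤ a) : ConvexOn ℝ (Set.Ici (2:ℝ)) (phi a) := by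
  have hop : ∀ x : ℝ, 2 < x → deriv (phi a) =ᶠ[nhds x] psi a := by
    intro x hx
    filter_upwards [Ioi_mem_nhds (show (3/2:ℝ) < x by linarith)] with y hy
    exact (hasDerivAt_phi ha hy).deriv
  refine convexOn_of_deriv2_nonneg (convex_Ici 2) ?_ ?_ ?_ ?_
  · intro x hx
    exact (hasDerivAt_phi ha (by simp only [Set.mem_Ici] at hx; linarith)).continuousAt.continuousWithinAt
  · intro x hx
    rw [interior_Ici] at hx
    exact (hasDerivAt_phi ha (by simp only [Set.mem_Ioi] at hx; linarith)).differentiableAt.differentiableWithinAt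
  · intro x hx
    rw [interior_Ici] at hx
    simp only [Set.mem_Ioi] at hx
    have hpsi := (hasDerivAt_psi ha (show (3/2:ℝ) < x by linarith)).differentiableAt
    exact ((hop x hx).differentiableAt_iff.2 hpsi).differentiableWithinAt
  · intro x hx
    rw [interior_Ici] at hx
    simp only [Set.mem_Ioi] at hx
    have h2 : deriv^[2] (phi a) x = chi a x := by
      rw [Function.iterate_succ, Function.iterate_one, Function.comp_apply]
      rw [Filter.EventuallyEq.deriv_eq (hop x hx)]
      exact (hasDerivAt_psi ha (by linarith)).deriv
    rw [h2]
    exact chi_nonneg ha (le_of_lt hx)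

lemma second_diff_phi {a : ℝ} (ha : 2 ≤ a) {y : ℝ} (hy : 2 ≤ y) :
    0 ≤ phi a (y + 2) - 2 * phi a (y + 1) + phi a y := by
  have h := (phi_convexOn ha).2 (Set.mem_Ici.2 hy) (Set.mem_Ici.2 (by linarith : (2:ℝ) ≤ y + 2))
    (by norm_num : (0:ℝ) ≤ 1/2) (by norm_num : (0:ℝ) ≤ 1/2) (by norm_num)
  have e : (1/2 : ℝ) • y + (1/2 : ℝ) • (y + 2) = y + 1 := by
    simp only [smul_eq_mul]; ring
  rw [e] at h
  simp only [smul_eq_mul] at h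
  linarith

lemma second_diff_g {a : ℝ} (ha : 2 ≤ a) (y : ℕ) :
    0 ≤ phi a ((y:ℝ) + 2) - 2 * phi a ((y:ℝ) + 1) + phi a (y:ℝ) := by
  have ha0 : (0:ℝ) < a := by linarith
  match y with
  | 0 =>
    have p0 : phi a 0 = 0 := by unfold phi; norm_num
    have p1 : phi a 1 = 0 := by unfold phi; norm_num
    have p2 : phi a 2 = 2 * (Real.log (a + 1) - Real.log a) := by
      unfold phi
      rw [show (2:ℝ) - 1 + a = a + 1 from by ring, show (2:ℝ) - 2 + a = a from by ring]
      ring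
    have hlog : Real.log a ≤ Real.log (a + 1) := Real.log_le_log ha0 (by linarith)
    norm_num [p0, p1, p2]
    linarith
  | 1 =>
    have p1 : phi a 1 = 0 := by unfold phi; norm_num
    have p2 : phi a 2 = 2 * (Real.log (a + 1) - Real.log a) := by
      unfold phi
      rw [show (2:ℝ) - 1 + a = a + 1 from by ring, show (2:ℝ) - 2 + a = a from by ring]
      ring
    have p3 : phi a 3 = 6 * (Real.log (a + 2) - Real.log (a + 1)) := by
      unfold phi
      rw [show (3:ℝ) - 1 + a = a + 2 from by ring, show (3:ℝ) - 2 + a = a + 1 from by ring]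
      ring
    have hpoly : (a + 1) ^ 5 ≤ (a + 2) ^ 3 * a ^ 2 := by nlinarith [sq_nonneg a, sq_nonneg (a - 2), sq_nonneg (a*a - 4)]
    have hlog := Real.log_le_log (by positivity) hpoly
    rw [Real.log_mul (by positivity) (by positivity), Real.log_pow, Real.log_pow,
      Real.log_pow] at hlog
    push_cast at hlog
    norm_num [p1, p2, p3]
    linarith
  | (n + 2) =>
    have h := second_diff_phi (a := a) ha (y := (n:ℝ) + 2) (by norm_num [Nat.cast_nonneg] : (2:ℝ) ≤ (n:ℝ) + 2)
    push_cast
    norm_num at h ⊢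
    convert h using 3 <;> ring

lemma choose_id (N x : ℕ) :
    (N + 2).choose (x + 2) * (x + 2) * (x + 1) = (N + 2) * ((N + 1) * N.choose x) := by
  have h1 := Nat.add_one_mul_choose_eq (N + 1) (x + 1)
  have h2 := Nat.add_one_mul_choose_eq N x
  calc (N + 2).choose (x + 2) * (x + 2) * (x + 1)
      = ((N + 2) * (N + 1).choose (x + 1)) * (x + 1) := by rw [← h1]
    _ = (N + 2) * ((N + 1).choose (x + 1) * (x + 1)) := by rw [mul_assoc]
    _ = (N + 2) * ((N + 1) * N.choose x) := by rw [← h2]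

/-- For `α̃ ≥ 2`, the function `G_{N,α̃}` is convex on `(0, 1)`. -/
theorem G_convexOn (N : ℕ) (a : ℝ) (ha : 2 ≤ a) :
    ConvexOn ℝ (Set.Ioo (0 : ℝ) 1) (G N a) := by
  set g : ℕ → ℝ := fun y => phi a (y : ℝ) with hg
  have hp0 : g 0 = 0 := by simp only [hg]; unfold phi; norm_num
  have hp1 : g 1 = 0 := by simp only [hg]; unfold phi; norm_num
  have hΔ : ∀ y : ℕ, 0 ≤ g (y + 2) - 2 * g (y + 1) + g y := by
    intro y
    have := second_diff_g ha y
    simp only [hg]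
    push_cast
    convert this using 3 <;> push_cast <;> ring
  have hGeq : G N a = fun t => (((N:ℝ) + 2) * ((N:ℝ) + 1))⁻¹ • (Q (N + 2) g).eval t := by
    funext t
    rw [Q_eval]
    rw [show N + 2 + 1 = (N + 1) + 1 + 1 from rfl]
    rw [Finset.sum_range_succ' _ (N + 1 + 1), Finset.sum_range_succ' _ (N + 1)]
    simp only [hp0, hp1, zero_mul, add_zero]
    unfold G
    rw [Finset.mul_sum, smul_eq_mul, Finset.mul_sum]
    refine Finset.sum_congr rfl fun x hx => ?_
    have hx0 : (0:ℝ) ≤ (x:ℝ) := Nat.cast_nonneg x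
    have hxa : (0:ℝ) < (x:ℝ) + a := by linarith
    have h1xa : (0:ℝ) < 1 + (x:ℝ) + a := by linarith
    have hlog : -Real.log (1 - 1 / (1 + (x:ℝ) + a))
        = Real.log ((x:ℝ) + 1 + a) - Real.log ((x:ℝ) + a) := by
      rw [show (1:ℝ) - 1 / (1 + (x:ℝ) + a) = ((x:ℝ) + a) / (1 + (x:ℝ) + a) from by
        field_simp; ring]
      rw [Real.log_div hxa.ne' h1xa.ne', neg_sub,
        show (1:ℝ) + (x:ℝ) + a = (x:ℝ) + 1 + a from by ring]
    have hgx : g (x + 2) = (((x:ℝ) + 2) * ((x:ℝ) + 1))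
        * (Real.log ((x:ℝ) + 1 + a) - Real.log ((x:ℝ) + a)) := by
      simp only [hg]
      unfold phi
      push_cast
      ring_nf
    have hch : (((N + 2).choose (x + 2) : ℝ)) * (((x:ℝ) + 2) * ((x:ℝ) + 1))
        = ((N:ℝ) + 2) * (((N:ℝ) + 1) * (N.choose x : ℝ)) := by
      have := choose_id N x
      have := congrArg (fun n : ℕ => (n : ℝ)) this
      push_cast at this
      linarith [this]
    have hsub : N + 2 - (x + 2) = N - x := by omega
    simp only [show x + 1 + 1 = x + 2 from by omega]
    rw [hsub, hlog, hgx]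
    have hNN : (((N:ℝ) + 2) * ((N:ℝ) + 1)) ≠ 0 := by positivity
    rw [inv_mul_eq_div, eq_div_iff hNN]
    have hpow : t ^ (x + 2) = t ^ x * t ^ 2 := by ring
    rw [hpow]
    linear_combination (-(t ^ x * t ^ 2 * (1 - t) ^ (N - x)
      * (Real.log ((x:ℝ) + 1 + a) - Real.log ((x:ℝ) + a)))) * hch
  rw [hGeq]
  exact (bernstein_convex N g hΔ).smul (by positivity)
end
end
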